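/- arXiv:2208.02113 — 10 statements merged into one kernel-verified Lean document; each statement's English description precedes it below -/
import Mathlib

section
/- For all integers d ≥ 1 and n ≥ 1, p_{d+1}(n) ≤ Σ_c Π_i p_d(c_i), where the sum runs over all compositions c = (c_1, ..., c_k) of n into positive integer parts (k ranging over 1 ≤ k ≤ n) and the product runs over the parts of c. -/
/-!
Cut a lower set `Q ⊆ ℕ^(d+1)` of size `n` into layers according to its last coordinate. Each
layer is a lower set in `ℕ^d`, the nonempty layers are exactly the first `k` ones, and their sizes
form a composition of `n` into `k` parts. Since `Q` is the union of its layers, `Q` is determined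
by this composition together with the layers, which gives an injection into a set of size
`∑_c ∏_i p_d(c_i)`. (The injection is not onto, since the layers of `Q` are moreover nested.)
-/

open Finset

/-- `lowerCount d n` is the number of lower sets `Q ⊆ ℕ^d` with exactly `n` elements. -/
noncomputable def lowerCount (d n : ℕ) : ℕ :=
  Nat.card {Q : Finset (Fin d → ℕ) // IsLowerSet (↑Q : Set (Fin d → ℕ)) ∧ Q.card = n}

theorem IsLowerSet.apply_lt_card {ι : Type*} [DecidableEq ι] {Q : Finset (ι → ℕ)}
    (hQ : IsLowerSet (Q : Set (ι → ℕ))) {x : ι → ℕ} (hx : x ∈ Q) (i : ι) :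
    x i < #Q := by
  let lower : ℕ ↪ (ι → ℕ) := ⟨Function.update x i, Function.update_injective x i⟩
  have hsub : (range (x i + 1)).map lower ⊆ Q := by
    simp only [subset_iff, mem_map, mem_range]
    rintro _ ⟨j, hj, rfl⟩
    exact hQ (update_le_iff.2 ⟨Nat.le_of_lt_succ hj, fun _ _ => le_rfl⟩) hx
  calc x i < #((range (x i + 1)).map lower) := by
        rw [card_map, card_range]; exact Nat.lt_succ_self _
    _ ≤ #Q := card_le_card hsub

abbrev LowerFinset (d n : ℕ) : Type :=
  {Q : Finset (Fin d → ℕ) // IsLowerSet (↑Q : Set (Fin d → ℕ)) ∧ Q.card = n}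

instance LowerFinset.finite (d n : ℕ) : Finite (LowerFinset d n) := by
  let box : Finset (Fin d → ℕ) := Fintype.piFinset fun _ => range n
  have hbox (Q : LowerFinset d n) : Q.1 ∈ box.powerset := by
    obtain ⟨Q, hQ, rfl⟩ := Q
    refine mem_powerset.2 fun x hx => Fintype.mem_piFinset.2 fun i => ?_
    exact mem_range.2 (hQ.apply_lt_card hx i)
  exact Finite.of_injective (fun Q => (⟨Q.1, hbox Q⟩ : box.powerset))
    fun Q R h => Subtype.ext (by simpa using h)

variable {d n : ℕ}

theorem Fin.snoc_le_snoc {α : Type*} [Preorder α] {y z : Fin d → α} {a b : α} (h : y ≤ z)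
    (hab : a ≤ b) : (Fin.snoc y a : Fin (d + 1) → α) ≤ Fin.snoc z b :=
  (Fin.snocOrderIso fun _ => α).monotone (Prod.mk_le_mk.2 ⟨hab, h⟩)

def layer (Q : Finset (Fin (d + 1) → ℕ)) (j : ℕ) : Finset (Fin d → ℕ) :=
  {x ∈ Q | x (Fin.last d) = j}.image Fin.init

section Layers

variable {Q : Finset (Fin (d + 1) → ℕ)} {j : ℕ}

theorem mem_layer {y : Fin d → ℕ} : y ∈ layer Q j ↔ Fin.snoc y j ∈ Q := by
  constructor
  · simp only [layer, mem_image, mem_filter]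
    rintro ⟨x, ⟨hx, rfl⟩, rfl⟩
    rwa [Fin.snoc_init_self]
  · exact fun h => mem_image.2 ⟨_, mem_filter.2 ⟨h, Fin.snoc_last _ _⟩, Fin.init_snoc _ _⟩

theorem isLowerSet_layer (hQ : IsLowerSet (Q : Set (Fin (d + 1) → ℕ))) (j : ℕ) :
    IsLowerSet (layer Q j : Set (Fin d → ℕ)) := fun _ _ hle hz =>
  mem_layer.2 (hQ (Fin.snoc_le_snoc hle le_rfl) (mem_layer.1 hz))

theorem card_layer : #(layer Q j) = #{x ∈ Q | x (Fin.last d) = j} := by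
  refine card_image_of_injOn fun x hx y hy hxy => ?_
  rw [← Fin.snoc_init_self x, ← Fin.snoc_init_self y, hxy, (mem_filter.1 hx).2,
    (mem_filter.1 hy).2]

-- One more than the largest last coordinate: the layers below `height Q` are the nonempty ones.
def height (Q : Finset (Fin (d + 1) → ℕ)) : ℕ := Q.sup fun x => x (Fin.last d) + 1

theorem last_lt_height {x : Fin (d + 1) → ℕ} (hx : x ∈ Q) : x (Fin.last d) < height Q :=
  Nat.lt_of_succ_le (le_sup (f := fun x => x (Fin.last d) + 1) hx)

theorem layer_nonempty_of_lt_height (hQ : IsLowerSet (Q : Set (Fin (d + 1) → ℕ)))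
    (hj : j < height Q) : (layer Q j).Nonempty := by
  obtain ⟨x, hx, hjx⟩ := Finset.lt_sup_iff.1 hj
  refine ⟨Fin.init x, mem_layer.2 (hQ ?_ hx)⟩
  conv_rhs => rw [← Fin.snoc_init_self x]
  exact Fin.snoc_le_snoc le_rfl (Nat.le_of_lt_succ hjx)

theorem sum_card_layer : ∑ j ∈ range (height Q), #(layer Q j) = #Q := by
  simp only [card_layer]
  exact (card_eq_sum_card_fiberwise fun x hx => mem_range.2 (last_lt_height hx)).symm

end Layers

def layerComposition (Q : LowerFinset (d + 1) n) : Composition n where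
  blocks := List.ofFn fun j : Fin (height Q.1) => #(layer Q.1 j)
  blocks_pos := by
    simp only [List.mem_ofFn, forall_exists_index]
    rintro _ j rfl
    exact card_pos.2 (layer_nonempty_of_lt_height Q.2.1 j.2)
  blocks_sum := by
    rw [List.sum_ofFn, Fin.sum_univ_eq_sum_range (fun j => #(layer Q.1 j)), sum_card_layer, Q.2.2]

theorem layerComposition_length (Q : LowerFinset (d + 1) n) :
    (layerComposition Q).length = height Q.1 :=
  List.length_ofFn

theorem layerComposition_blocksFun (Q : LowerFinset (d + 1) n)
    (i : Fin (layerComposition Q).length) : (layerComposition Q).blocksFun i = #(layer Q.1 i) :=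
  List.getElem_ofFn _

abbrev CompositionLowerFinsets (d n : ℕ) : Type :=
  Σ c : Composition n, ∀ i : Fin c.length, LowerFinset d (c.blocksFun i)

def toLayers (Q : LowerFinset (d + 1) n) : CompositionLowerFinsets d n :=
  ⟨layerComposition Q, fun i => ⟨layer Q.1 i, isLowerSet_layer Q.2.1 i,
    (layerComposition_blocksFun Q i).symm⟩⟩

def stack {k : ℕ} (S : Fin k → Finset (Fin d → ℕ)) : Finset (Fin (d + 1) → ℕ) :=
  univ.biUnion fun i => (S i).image (Fin.snoc · i)

theorem mem_stack {k : ℕ} {S : Fin k → Finset (Fin d → ℕ)} {x : Fin (d + 1) → ℕ} :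
    x ∈ stack S ↔ ∃ i : Fin k, x (Fin.last d) = i ∧ Fin.init x ∈ S i := by
  simp only [stack, mem_biUnion, mem_univ, true_and, mem_image]
  constructor
  · rintro ⟨i, y, hy, rfl⟩
    exact ⟨i, Fin.snoc_last _ _, by rwa [Fin.init_snoc]⟩
  · rintro ⟨i, hi, hx⟩
    exact ⟨i, _, hx, by rw [← hi, Fin.snoc_init_self]⟩

theorem stack_layer {Q : Finset (Fin (d + 1) → ℕ)} {k : ℕ} (hk : height Q = k) :
    stack (fun i : Fin k => layer Q i) = Q := by
  ext x
  rw [mem_stack]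
  constructor
  · rintro ⟨i, hi, hx⟩
    rwa [mem_layer, ← hi, Fin.snoc_init_self] at hx
  · intro hx
    exact ⟨⟨_, hk ▸ last_lt_height hx⟩, rfl, by rwa [mem_layer, Fin.snoc_init_self]⟩

theorem stack_toLayers (Q : LowerFinset (d + 1) n) :
    stack (fun i => ((toLayers Q).2 i).1) = Q.1 :=
  stack_layer (layerComposition_length Q).symm

theorem toLayers_injective : Function.Injective (toLayers : LowerFinset (d + 1) n → _) :=
  fun Q R h => Subtype.ext (by rw [← stack_toLayers Q, ← stack_toLayers R, h])

theorem card_compositionLowerFinsets :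
    Nat.card (CompositionLowerFinsets d n) =
      ∑ c : Composition n, (c.blocks.map (lowerCount d)).prod := by
  rw [Nat.card_sigma]
  refine sum_congr rfl fun c _ => ?_
  rw [Nat.card_pi, ← c.ofFn_blocksFun, List.map_ofFn, List.prod_ofFn]
  rfl

theorem stmt_4_general (d n : ℕ) :
    lowerCount (d + 1) n ≤
      ∑ c : Composition n, (c.blocks.map (fun i => lowerCount d i)).prod := by
  rw [← card_compositionLowerFinsets]
  exact Nat.card_le_card_of_injective _ toLayers_injective

theorem stmt_4 (d n : ℕ) (hd : 1 ≤ d) (hn : 1 ≤ n) :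
    lowerCount (d + 1) n ≤
      ∑ c : Composition n, (c.blocks.map (fun i => lowerCount d i)).prod :=
  stmt_4_general d n
end

section
/- For all integers d ≥ 2 and n ≥ 1, p_d(n) ≥ C(d+n−2, n−1), where C(a,b) denotes the binomial coefficient; consequently p_d(n) ≥ d^{n−1}/(n−1)!. -/
/-- The "star" lower set: origin plus segments of length `k i` along each axis. -/
def segSet {d : ℕ} (k : Fin d → ℕ) : Finset (Fin d → ℕ) :=
  insert 0 ((Finset.univ : Finset (Fin d)).biUnion fun i =>
    (Finset.range (k i)).image fun t => Function.update (0 : Fin d → ℕ) i (t + 1))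

lemma mem_segSet {d : ℕ} {k : Fin d → ℕ} {l : Fin d → ℕ} :
    l ∈ segSet k ↔ l = 0 ∨ ∃ i t, t < k i ∧ l = Function.update (0 : Fin d → ℕ) i (t + 1) := by
  simp only [segSet, Finset.mem_insert, Finset.mem_biUnion, Finset.mem_univ, true_and,
    Finset.mem_image, Finset.mem_range]
  constructor
  · rintro (h | ⟨i, t, ht, h⟩)
    · exact Or.inl h
    · exact Or.inr ⟨i, t, ht, h.symm⟩
  · rintro (h | ⟨i, t, ht, h⟩)
    · exact Or.inl h
    · exact Or.inr ⟨i, t, ht, h.symm⟩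

lemma update_zero_apply {d : ℕ} (i j : Fin d) (v : ℕ) :
    Function.update (0 : Fin d → ℕ) i v j = if j = i then v else 0 := by
  rcases eq_or_ne j i with h | h
  · subst h; simp
  · simp [Function.update_of_ne h, h]

lemma segSet_card {d : ℕ} (k : Fin d → ℕ) : (segSet k).card = ∑ i, k i + 1 := by
  rw [segSet, Finset.card_insert_of_notMem, Finset.card_biUnion]
  · congr 1
    refine Finset.sum_congr rfl fun i _ => ?_
    rw [Finset.card_image_of_injective, Finset.card_range]
    intro a b hab
    have := congrFun hab i
    simpa using this
  · intro i _ j _ hij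
    simp only [Finset.disjoint_left, Finset.mem_image, Finset.mem_range]
    rintro x ⟨t, _, rfl⟩ ⟨s, _, hx⟩
    have h1 := congrFun hx i
    rw [update_zero_apply, update_zero_apply] at h1
    simp [hij] at h1
  · simp only [Finset.mem_biUnion, Finset.mem_univ, true_and, Finset.mem_image,
      Finset.mem_range, not_exists]
    rintro i t ⟨_, h⟩
    have := congrFun h i
    rw [update_zero_apply] at this
    simp at this

lemma segSet_isLowerSet {d : ℕ} (k : Fin d → ℕ) :
    IsLowerSet (↑(segSet k) : Set (Fin d → ℕ)) := by
  intro a b hba ha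
  simp only [Finset.coe_sort_coe, Finset.mem_coe] at ha ⊢
  rw [mem_segSet] at ha ⊢
  rcases ha with rfl | ⟨i, t, ht, rfl⟩
  · left
    exact le_antisymm hba (by intro j; simp)
  · -- b ≤ update 0 i (t+1)
    rcases Nat.eq_zero_or_pos (b i) with hbi | hbi
    · left
      funext j
      simp only [Pi.zero_apply]
      have := hba j
      rw [update_zero_apply] at this
      rcases eq_or_ne j i with rfl | h
      · exact hbi
      · simpa [h] using this
    · right
      refine ⟨i, b i - 1, ?_, ?_⟩
      · have := hba i
        rw [update_zero_apply] at this
        rw [if_pos rfl] at this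
        have h2 : b i ≤ t + 1 := this
        have h3 : 0 < b i := hbi
        omega
      · funext j
        rw [update_zero_apply]
        rcases eq_or_ne j i with rfl | h
        · have h3 : 0 < b j := hbi
          rw [if_pos rfl]
          omega
        · have := hba j
          rw [update_zero_apply] at this
          simp only [if_neg h] at this ⊢
          have h2 : b j ≤ 0 := this
          omega

lemma segSet_injective {d : ℕ} : Function.Injective (segSet (d := d)) := by
  have key : ∀ k k' : Fin d → ℕ, segSet k = segSet k' → ∀ i, k i ≤ k' i := by
    intro k k' h i
    rcases Nat.eq_zero_or_pos (k i) with h0 | h0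
    · omega
    · have hmem : Function.update (0 : Fin d → ℕ) i (k i) ∈ segSet k := by
        rw [mem_segSet]
        exact Or.inr ⟨i, k i - 1, by omega, by rw [Nat.sub_add_cancel h0]⟩
      rw [h, mem_segSet] at hmem
      rcases hmem with h1 | ⟨i', t', ht', h1⟩
      · have := congrFun h1 i
        rw [update_zero_apply] at this
        simp at this
        omega
      · have h2 := congrFun h1 i
        rw [update_zero_apply, update_zero_apply] at h2
        simp only [if_pos rfl] at h2
        rcases eq_or_ne i i' with rfl | hne
        · simp at h2; omega
        · simp [hne] at h2; omega
  intro k k' h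
  funext i
  exact le_antisymm (key k k' h i) (key k' k h.symm i)

/-- Every lower set with `n` elements is contained in the box `[0, n)^d`. -/
lemma lowerSet_subset_box {d n : ℕ} (Q : Finset (Fin d → ℕ))
    (hQ : IsLowerSet (↑Q : Set (Fin d → ℕ))) (hcard : Q.card = n) :
    Q ⊆ Fintype.piFinset fun _ : Fin d => Finset.range n := by
  intro l hl
  rw [Fintype.mem_piFinset]
  intro j
  rw [Finset.mem_range]
  have hsub : (Finset.range (l j + 1)).image (Function.update l j) ⊆ Q := by
    intro x hx
    simp only [Finset.mem_image, Finset.mem_range] at hx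
    obtain ⟨t, ht, rfl⟩ := hx
    have hle : Function.update l j t ≤ l := by
      intro j'
      rcases eq_or_ne j' j with rfl | h
      · simp; omega
      · simp [Function.update_of_ne h, h]
    exact hQ hle hl
  have hcard2 : ((Finset.range (l j + 1)).image (Function.update l j)).card = l j + 1 := by
    rw [Finset.card_image_of_injective, Finset.card_range]
    intro a b hab
    have := congrFun hab j
    simpa using this
  have := Finset.card_le_card hsub
  omega

instance lowerSetFinite (d n : ℕ) :
    Finite {Q : Finset (Fin d → ℕ) // IsLowerSet (↑Q : Set (Fin d → ℕ)) ∧ Q.card = n} := by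
  have : Function.Injective
      (fun Q : {Q : Finset (Fin d → ℕ) // IsLowerSet (↑Q : Set (Fin d → ℕ)) ∧ Q.card = n} =>
        (⟨Q.1, Finset.mem_powerset.mpr (lowerSet_subset_box Q.1 Q.2.1 Q.2.2)⟩ :
          ↥(Fintype.piFinset fun _ : Fin d => Finset.range n).powerset)) := by
    intro Q Q' h
    simp only [Subtype.mk.injEq] at h
    exact Subtype.ext h
  exact Finite.of_injective _ this

theorem stmt_5 (d n : ℕ) (hd : 2 ≤ d) (hn : 1 ≤ n) :
    Nat.choose (d + n - 2) (n - 1) ≤ lowerCount d n ∧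
      (d : ℝ) ^ (n - 1) / (Nat.factorial (n - 1) : ℝ) ≤ (lowerCount d n : ℝ) := by
  have hchoose : Nat.choose (d + n - 2) (n - 1) ≤ lowerCount d n := by
    -- injection from Sym (Fin d) (n-1) into lower sets of size n
    set T := {Q : Finset (Fin d → ℕ) // IsLowerSet (↑Q : Set (Fin d → ℕ)) ∧ Q.card = n}
    have hF : ∀ m : Sym (Fin d) (n - 1),
        IsLowerSet (↑(segSet fun i => Multiset.count i (m : Multiset (Fin d))) :
          Set (Fin d → ℕ)) ∧
        (segSet fun i => Multiset.count i (m : Multiset (Fin d))).card = n := by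
      intro m
      refine ⟨segSet_isLowerSet _, ?_⟩
      rw [segSet_card]
      have hsum : ∑ i : Fin d, Multiset.count i (m : Multiset (Fin d)) =
          Multiset.card (m : Multiset (Fin d)) :=
        Multiset.sum_count_eq_card fun a _ => Finset.mem_univ a
      rw [hsum, Sym.card_coe]
      omega
    let F : Sym (Fin d) (n - 1) → T := fun m =>
      ⟨segSet fun i => Multiset.count i (m : Multiset (Fin d)), hF m⟩
    have hFinj : Function.Injective F := by
      intro m m' h
      have h1 : segSet (fun i => Multiset.count i (m : Multiset (Fin d))) =
          segSet (fun i => Multiset.count i (m' : Multiset (Fin d))) :=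
        congrArg Subtype.val h
      have h2 := segSet_injective h1
      refine Sym.coe_injective (Multiset.ext.mpr fun a => ?_)
      exact congrFun h2 a
    have hle : Nat.card (Sym (Fin d) (n - 1)) ≤ Nat.card T :=
      Nat.card_le_card_of_injective F hFinj
    have hcardsym : Nat.card (Sym (Fin d) (n - 1)) = Nat.choose (d + n - 2) (n - 1) := by
      rw [Nat.card_eq_fintype_card, Sym.card_sym_eq_choose, Fintype.card_fin]
      congr 1
      omega
    rw [hcardsym] at hle
    exact hle
  refine ⟨hchoose, ?_⟩
  have hpow : d ^ (n - 1) ≤ Nat.factorial (n - 1) * Nat.choose (d + n - 2) (n - 1) := by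
    have h1 := Nat.pow_sub_le_descFactorial (d + n - 2) (n - 1)
    rw [Nat.descFactorial_eq_factorial_mul_choose] at h1
    have h2 : d + n - 2 + 1 - (n - 1) = d := by omega
    rw [h2] at h1
    exact h1
  have hfac : (0 : ℝ) < (Nat.factorial (n - 1) : ℝ) := by
    exact_mod_cast Nat.factorial_pos (n - 1)
  rw [div_le_iff₀ hfac]
  calc ((d : ℝ)) ^ (n - 1) = ((d ^ (n - 1) : ℕ) : ℝ) := by push_cast; ring
    _ ≤ ((Nat.factorial (n - 1) * Nat.choose (d + n - 2) (n - 1) : ℕ) : ℝ) := by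
        exact_mod_cast hpow
    _ ≤ (lowerCount d n : ℝ) * (Nat.factorial (n - 1) : ℝ) := by
        push_cast
        rw [mul_comm]
        exact mul_le_mul_of_nonneg_right (by exact_mod_cast hchoose) (le_of_lt hfac)
end

section
/- For all integers d ≥ 2, m ≥ 0, and n ≥ 1 with n > C(m+d, d), one has p_d(n) ≥ 2^{C(m+d−1, d−1)}. -/
open Finset
noncomputable def layerF (d m : ℕ) : Finset (Fin d → ℕ) :=
  (Fintype.piFinset fun _ => Finset.range (m+1)).filter (fun v => ∑ i, v i = m)
lemma mem_layerF {d m : ℕ} {v : Fin d → ℕ} : v ∈ layerF d m ↔ ∑ i, v i = m := by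
  simp only [layerF, mem_filter, Fintype.mem_piFinset, mem_range, Nat.lt_succ_iff,
    and_iff_right_iff_imp]
  intro hs i
  exact hs ▸ Finset.single_le_sum (fun j _ => Nat.zero_le _) (mem_univ i)
lemma card_layerF (d m : ℕ) : (layerF d m).card = (d + m - 1).choose m := by
  rw [← Fintype.card_coe]
  rw [Fintype.card_congr ((Equiv.subtypeEquivRight (fun v => mem_layerF)).trans
    (Sym.equivNatSumOfFintype (Fin d) m).symm)]
  rw [Sym.card_sym_eq_multichoose, Nat.multichoose_eq, Fintype.card_fin]
noncomputable def simplexF (d m : ℕ) : Finset (Fin d → ℕ) :=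
  (Fintype.piFinset fun _ => Finset.range (m+1)).filter (fun v => ∑ i, v i ≤ m)
lemma mem_simplexF {d m : ℕ} {v : Fin d → ℕ} : v ∈ simplexF d m ↔ ∑ i, v i ≤ m := by
  simp only [simplexF, mem_filter, Fintype.mem_piFinset, mem_range, Nat.lt_succ_iff,
    and_iff_right_iff_imp]
  intro hs i
  exact le_trans (Finset.single_le_sum (fun j _ => Nat.zero_le _) (mem_univ i)) hs
lemma card_simplexF (d m : ℕ) : (simplexF d m).card = (m + d).choose d := by
  have hb : (simplexF d m).card = (layerF (d+1) m).card := by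
    apply Finset.card_bij' (fun (v : Fin d → ℕ) (_ : v ∈ simplexF d m) => Fin.cons (m - ∑ i, v i) v)
      (fun (w : Fin (d+1) → ℕ) (_ : w ∈ layerF (d+1) m) => Fin.tail w)
    · intro v hv
      rw [mem_layerF, Fin.sum_cons]
      exact Nat.sub_add_cancel (mem_simplexF.mp hv)
    · intro w hw
      rw [mem_simplexF]
      have h0 := mem_layerF.mp hw
      rw [Fin.sum_univ_succ] at h0
      have : ∑ i : Fin d, Fin.tail w i = ∑ i : Fin d, w i.succ := rfl
      omega
    · intro v hv; exact Fin.tail_cons _ _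
    · intro w hw
      have h0 := mem_layerF.mp hw
      rw [Fin.sum_univ_succ] at h0
      have h1 : ∑ i : Fin d, Fin.tail w i = ∑ i : Fin d, w i.succ := rfl
      have h2 : m - ∑ i, Fin.tail w i = w 0 := by omega
      rw [h2, Fin.cons_self_tail]
  rw [hb, card_layerF]
  have h1 : d + 1 + m - 1 = m + d := by omega
  rw [h1]
  have := Nat.choose_symm (Nat.le_add_left d m)
  simpa using this

lemma sum_single {d : ℕ} (i : Fin d) (c : ℕ) : ∑ j, Pi.single i c j = c :=
  Fintype.sum_pi_single' i c

lemma single_inj {d m : ℕ} (hm : 1 ≤ m) {i j : Fin d}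
    (h : (Pi.single i m : Fin d → ℕ) = Pi.single j m) : i = j := by
  by_contra hne
  have h2 := congrFun h i
  rw [Pi.single_eq_same, Pi.single_eq_of_ne hne] at h2
  omega

lemma le_single {d c : ℕ} {i : Fin d} {y : Fin d → ℕ} (h : y ≤ Pi.single i c) :
    y = Pi.single i (y i) := by
  funext j
  by_cases hj : j = i
  · subst hj; rw [Pi.single_eq_same]
  · have h2 := h j
    rw [Pi.single_eq_of_ne hj] at h2
    rw [Pi.single_eq_of_ne hj]
    exact Nat.le_zero.mp h2

section Construction
variable (e m n : ℕ)

def axesF : Finset (Fin (e+2) → ℕ) := Finset.univ.image (fun i : Fin (e+2) => Pi.single i m)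

def uF (S : Finset (Fin (e+2) → ℕ)) : Finset (Fin (e+2)) :=
  Finset.univ.filter (fun i => (Pi.single i m : Fin (e+2) → ℕ) ∈ S)

def tF (S : Finset (Fin (e+2) → ℕ)) : Finset (Fin (e+2)) :=
  if uF e m S = ∅ then {0, 1} else uF e m S

noncomputable def i0 (S : Finset (Fin (e+2) → ℕ)) : Fin (e+2) :=
  if h : uF e m S = ∅ then 1 else (uF e m S).min' (Finset.nonempty_of_ne_empty h)

noncomputable def tl (S : Finset (Fin (e+2) → ℕ)) : ℕ :=
  n - ((simplexF (e+2) (m-1)).card + (S \ axesF e m).card + (tF e m S).card)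

noncomputable def enc (S : Finset (Fin (e+2) → ℕ)) : Finset (Fin (e+2) → ℕ) :=
  ((simplexF (e+2) (m-1) ∪ (S \ axesF e m)) ∪
    (tF e m S).image (fun i => Pi.single i m)) ∪
    (Finset.Icc 1 (tl e m n S)).image (fun k => Pi.single (i0 e m S) (m + k))

variable {e m n}

lemma mem_axesF {x : Fin (e+2) → ℕ} : x ∈ axesF e m ↔ ∃ i, x = Pi.single i m := by
  simp [axesF, eq_comm]

lemma i0_mem_tF (S : Finset (Fin (e+2) → ℕ)) : i0 e m S ∈ tF e m S := by
  unfold i0 tF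
  by_cases h : uF e m S = ∅
  · simp [h]
  · rw [dif_neg h, if_neg h]
    exact Finset.min'_mem _ _

lemma sum_bound (hm : 1 ≤ m) {S : Finset (Fin (e+2) → ℕ)} (hS : S ⊆ layerF (e+2) m) :
    (simplexF (e+2) (m-1)).card + (S \ axesF e m).card + (tF e m S).card
      ≤ (m + (e+2)).choose (e+2) := by
  have h1 : (simplexF (e+2) (m-1)).card = (m+e+1).choose (e+2) := by
    rw [card_simplexF]; congr 1; omega
  have haxes_sub : axesF e m ⊆ layerF (e+2) m := by
    intro x hx
    obtain ⟨i, rfl⟩ := mem_axesF.mp hx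
    exact mem_layerF.mpr (sum_single i m)
  have haxes_card : (axesF e m).card = e+2 := by
    rw [axesF, Finset.card_image_of_injective _ (fun i j hij => single_inj hm hij)]
    simp
  have hlayer : (layerF (e+2) m).card = (m+e+1).choose (e+1) := by
    rw [card_layerF]
    have h2 : (e+2) + m - 1 = m + e + 1 := by omega
    rw [h2]
    have := Nat.choose_symm (show e+1 ≤ m+e+1 by omega)
    have h3 : m + e + 1 - (e+1) = m := by omega
    rw [h3] at this
    exact this
  have hL2 : e + 2 ≤ (layerF (e+2) m).card := by
    have := Finset.card_le_card haxes_sub; omega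
  have h2 : (S \ axesF e m).card ≤ (layerF (e+2) m).card - (e+2) := by
    have : S \ axesF e m ⊆ layerF (e+2) m \ axesF e m :=
      Finset.sdiff_subset_sdiff hS (le_refl _)
    calc (S \ axesF e m).card ≤ (layerF (e+2) m \ axesF e m).card := Finset.card_le_card this
      _ = (layerF (e+2) m).card - (e+2) := by
          rw [Finset.card_sdiff_of_subset haxes_sub, haxes_card]
  have h3 : (tF e m S).card ≤ e + 2 := by
    calc (tF e m S).card ≤ Fintype.card (Fin (e+2)) := Finset.card_le_univ _
      _ = e + 2 := by simp
  have hp : (m + (e+2)).choose (e+2) = (m+e+1).choose (e+1) + (m+e+1).choose (e+2) := by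
    have : m + (e+2) = (m+e+1) + 1 := by omega
    rw [this]
    exact Nat.choose_succ_succ (m+e+1) (e+1)
  omega

lemma tl_pos (hm : 1 ≤ m) (hn : (m + (e+2)).choose (e+2) < n) {S : Finset (Fin (e+2) → ℕ)}
    (hS : S ⊆ layerF (e+2) m) : 1 ≤ tl e m n S := by
  have := sum_bound hm hS
  unfold tl
  omega

lemma enc_card (hm : 1 ≤ m) (hn : (m + (e+2)).choose (e+2) < n) {S : Finset (Fin (e+2) → ℕ)}
    (hS : S ⊆ layerF (e+2) m) : (enc e m n S).card = n := by
  have hsumB : ∀ x ∈ S \ axesF e m, ∑ i, x i = m := fun x hx =>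
    mem_layerF.mp (hS (Finset.mem_sdiff.mp hx).1)
  have hAB : Disjoint (simplexF (e+2) (m-1)) (S \ axesF e m) := by
    rw [Finset.disjoint_left]
    intro x hx hx'
    have h1 := mem_simplexF.mp hx
    have h2 := hsumB x hx'
    omega
  have hABC : Disjoint (simplexF (e+2) (m-1) ∪ (S \ axesF e m))
      ((tF e m S).image (fun i => Pi.single i m)) := by
    rw [Finset.disjoint_right]
    intro x hx hx'
    obtain ⟨i, _, rfl⟩ := Finset.mem_image.mp hx
    rcases Finset.mem_union.mp hx' with h | h
    · have := mem_simplexF.mp h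
      rw [sum_single] at this
      omega
    · exact (Finset.mem_sdiff.mp h).2 (mem_axesF.mpr ⟨i, rfl⟩)
  have hABCD : Disjoint ((simplexF (e+2) (m-1) ∪ (S \ axesF e m)) ∪
      (tF e m S).image (fun i => Pi.single i m))
      ((Finset.Icc 1 (tl e m n S)).image (fun k => Pi.single (i0 e m S) (m + k))) := by
    rw [Finset.disjoint_right]
    intro x hx hx'
    obtain ⟨k, hk, rfl⟩ := Finset.mem_image.mp hx
    rw [Finset.mem_Icc] at hk
    have hsx : ∑ i, (Pi.single (i0 e m S) (m+k) : Fin (e+2) → ℕ) i = m + k := sum_single _ _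
    rcases Finset.mem_union.mp hx' with h | h
    · rcases Finset.mem_union.mp h with h' | h'
      · have := mem_simplexF.mp h'; omega
      · have := hsumB _ h'; omega
    · obtain ⟨i, _, hi⟩ := Finset.mem_image.mp h
      have := congrArg (fun v : Fin (e+2) → ℕ => ∑ j, v j) hi
      simp only [sum_single] at this
      omega
  have hC : ((tF e m S).image (fun i => (Pi.single i m : Fin (e+2) → ℕ))).card
      = (tF e m S).card := by
    apply Finset.card_image_of_injOn
    intro i _ j _ hij
    exact single_inj hm hij
  have hD : ((Finset.Icc 1 (tl e m n S)).image
      (fun k => (Pi.single (i0 e m S) (m + k) : Fin (e+2) → ℕ))).card = tl e m n S := by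
    rw [Finset.card_image_of_injOn, Nat.card_Icc]
    · omega
    · intro k _ k' _ h
      have h2 := congrFun h (i0 e m S)
      simp only [Pi.single_eq_same] at h2
      omega
  rw [enc, Finset.card_union_of_disjoint hABCD, Finset.card_union_of_disjoint hABC,
    Finset.card_union_of_disjoint hAB, hC, hD]
  have hb := sum_bound hm hS
  unfold tl
  omega

lemma enc_lower (hm : 1 ≤ m) {S : Finset (Fin (e+2) → ℕ)}
    (hS : S ⊆ layerF (e+2) m) :
    IsLowerSet (↑(enc e m n S) : Set (Fin (e+2) → ℕ)) := by
  intro a b hba ha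
  rw [Finset.mem_coe] at ha ⊢
  have hble : ∑ i, b i ≤ ∑ i, a i := Finset.sum_le_sum (fun i _ => hba i)
  have hstrict : b ≠ a → ∑ i, b i < ∑ i, a i := by
    intro hne
    obtain ⟨j, hj⟩ := Function.ne_iff.mp hne
    exact Finset.sum_lt_sum (fun i _ => hba i) ⟨j, Finset.mem_univ j, lt_of_le_of_ne (hba j) hj⟩
  rcases Finset.mem_union.mp ha with h | h
  · rcases Finset.mem_union.mp h with h' | h'
    · rcases Finset.mem_union.mp h' with h'' | h''
      · -- a in simplex
        have := mem_simplexF.mp h''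
        exact Finset.mem_union.mpr (Or.inl (Finset.mem_union.mpr (Or.inl
          (Finset.mem_union.mpr (Or.inl (mem_simplexF.mpr (by omega)))))))
      · -- a in S \ axes
        by_cases hba' : b = a
        · subst hba'; exact ha
        · have h1 : ∑ i, a i = m := mem_layerF.mp (hS (Finset.mem_sdiff.mp h'').1)
          have h2 := hstrict hba'
          exact Finset.mem_union.mpr (Or.inl (Finset.mem_union.mpr (Or.inl
            (Finset.mem_union.mpr (Or.inl (mem_simplexF.mpr (by omega)))))))
    · -- a = single i m, i in tF
      obtain ⟨i, hi, rfl⟩ := Finset.mem_image.mp h'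
      by_cases hba' : b = Pi.single i m
      · subst hba'; exact ha
      · have h1 : ∑ j, (Pi.single i m : Fin (e+2) → ℕ) j = m := sum_single i m
        have h2 := hstrict hba'
        exact Finset.mem_union.mpr (Or.inl (Finset.mem_union.mpr (Or.inl
          (Finset.mem_union.mpr (Or.inl (mem_simplexF.mpr (by omega)))))))
  · -- a = single i0 (m+k)
    obtain ⟨k, hk, rfl⟩ := Finset.mem_image.mp h
    rw [Finset.mem_Icc] at hk
    obtain ⟨c, hcdef⟩ : ∃ c, b (i0 e m S) = c := ⟨_, rfl⟩
    have hb : b = Pi.single (i0 e m S) c := hcdef ▸ le_single hba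
    have hc : c ≤ m + k := by
      have := hba (i0 e m S)
      rwa [Pi.single_eq_same, hcdef] at this
    rcases Nat.lt_or_ge c m with hcm | hcm
    · refine Finset.mem_union.mpr (Or.inl (Finset.mem_union.mpr (Or.inl
        (Finset.mem_union.mpr (Or.inl (mem_simplexF.mpr ?_))))))
      rw [hb, sum_single]
      omega
    · rcases Nat.eq_or_lt_of_le hcm with hcm' | hcm'
      · refine Finset.mem_union.mpr (Or.inl (Finset.mem_union.mpr (Or.inr ?_)))
        refine Finset.mem_image.mpr ⟨i0 e m S, i0_mem_tF S, ?_⟩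
        rw [hb, ← hcm']
      · refine Finset.mem_union.mpr (Or.inr (Finset.mem_image.mpr ⟨c - m, ?_, ?_⟩))
        · rw [Finset.mem_Icc]; omega
        · rw [hb, show m + (c - m) = c by omega]

noncomputable def dec (e m : ℕ) (Q : Finset (Fin (e+2) → ℕ)) : Finset (Fin (e+2) → ℕ) :=
  ((Q ∩ layerF (e+2) m) \ axesF e m) ∪
    (if (uF e m Q).min = (uF e (m+1) Q).min then uF e m Q else ∅).image
      (fun i => (Pi.single i m : Fin (e+2) → ℕ))

lemma sum_of_mem_enc {S : Finset (Fin (e+2) → ℕ)} (hS : S ⊆ layerF (e+2) m)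
    {x : Fin (e+2) → ℕ} (hx : x ∈ enc e m n S) :
    (∑ i, x i ≤ m - 1) ∨ (x ∈ S \ axesF e m) ∨ (∃ i ∈ tF e m S, x = Pi.single i m)
      ∨ (∃ k, 1 ≤ k ∧ k ≤ tl e m n S ∧ x = Pi.single (i0 e m S) (m + k)) := by
  rcases Finset.mem_union.mp hx with h | h
  · rcases Finset.mem_union.mp h with h' | h'
    · rcases Finset.mem_union.mp h' with h'' | h''
      · exact Or.inl (mem_simplexF.mp h'')
      · exact Or.inr (Or.inl h'')
    · obtain ⟨i, hi, rfl⟩ := Finset.mem_image.mp h'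
      exact Or.inr (Or.inr (Or.inl ⟨i, hi, rfl⟩))
  · obtain ⟨k, hk, rfl⟩ := Finset.mem_image.mp h
    rw [Finset.mem_Icc] at hk
    exact Or.inr (Or.inr (Or.inr ⟨k, hk.1, hk.2, rfl⟩))

lemma uF_enc (hm : 1 ≤ m) {S : Finset (Fin (e+2) → ℕ)} (hS : S ⊆ layerF (e+2) m) :
    uF e m (enc e m n S) = tF e m S := by
  ext i
  simp only [uF, Finset.mem_filter, Finset.mem_univ, true_and]
  constructor
  · intro hmem
    rcases sum_of_mem_enc hS hmem with h | h | h | h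
    · rw [sum_single] at h; omega
    · exact absurd (mem_axesF.mpr ⟨i, rfl⟩) (Finset.mem_sdiff.mp h).2
    · obtain ⟨j, hj, hij⟩ := h
      rwa [single_inj hm hij]
    · obtain ⟨k, hk1, _, hik⟩ := h
      have := congrArg (fun v : Fin (e+2) → ℕ => ∑ j, v j) hik
      simp only [sum_single] at this
      omega
  · intro hi
    exact Finset.mem_union.mpr (Or.inl (Finset.mem_union.mpr (Or.inr
      (Finset.mem_image.mpr ⟨i, hi, rfl⟩))))

lemma uF_succ_enc (hm : 1 ≤ m) (hn : (m + (e+2)).choose (e+2) < n)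
    {S : Finset (Fin (e+2) → ℕ)} (hS : S ⊆ layerF (e+2) m) :
    uF e (m+1) (enc e m n S) = {i0 e m S} := by
  ext i
  simp only [uF, Finset.mem_filter, Finset.mem_univ, true_and, Finset.mem_singleton]
  constructor
  · intro hmem
    rcases sum_of_mem_enc hS hmem with h | h | h | h
    · rw [sum_single] at h; omega
    · have := mem_layerF.mp (hS (Finset.mem_sdiff.mp h).1)
      rw [sum_single] at this; omega
    · obtain ⟨j, _, hij⟩ := h
      have := congrArg (fun v : Fin (e+2) → ℕ => ∑ j, v j) hij
      simp only [sum_single] at this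
      omega
    · obtain ⟨k, hk1, _, hik⟩ := h
      have hsum := congrArg (fun v : Fin (e+2) → ℕ => ∑ j, v j) hik
      simp only [sum_single] at hsum
      have hk : k = 1 := by omega
      subst hk
      exact single_inj (show 1 ≤ m + 1 by omega) hik
  · rintro rfl
    refine Finset.mem_union.mpr (Or.inr (Finset.mem_image.mpr ⟨1, ?_, rfl⟩))
    rw [Finset.mem_Icc]
    exact ⟨le_refl 1, tl_pos hm hn hS⟩

lemma inter_layer_enc (hm : 1 ≤ m) {S : Finset (Fin (e+2) → ℕ)} (hS : S ⊆ layerF (e+2) m) :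
    (enc e m n S ∩ layerF (e+2) m) \ axesF e m = S \ axesF e m := by
  ext x
  simp only [Finset.mem_sdiff, Finset.mem_inter]
  constructor
  · rintro ⟨⟨hx, hlx⟩, hax⟩
    have hsx := mem_layerF.mp hlx
    refine ⟨?_, hax⟩
    rcases sum_of_mem_enc hS hx with h | h | h | h
    · omega
    · exact (Finset.mem_sdiff.mp h).1
    · obtain ⟨i, _, rfl⟩ := h
      exact absurd (mem_axesF.mpr ⟨i, rfl⟩) hax
    · obtain ⟨k, hk1, _, rfl⟩ := h
      rw [sum_single] at hsx; omega
  · rintro ⟨hxS, hax⟩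
    refine ⟨⟨?_, hS hxS⟩, hax⟩
    exact Finset.mem_union.mpr (Or.inl (Finset.mem_union.mpr (Or.inl
      (Finset.mem_union.mpr (Or.inr (Finset.mem_sdiff.mpr ⟨hxS, hax⟩))))))

lemma dec_enc (hm : 1 ≤ m) (hn : (m + (e+2)).choose (e+2) < n)
    {S : Finset (Fin (e+2) → ℕ)} (hS : S ⊆ layerF (e+2) m) :
    dec e m (enc e m n S) = S := by
  rw [dec, uF_enc hm hS, uF_succ_enc hm hn hS, inter_layer_enc hm hS]
  rw [Finset.min_singleton]
  by_cases h : uF e m S = ∅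
  · have ht : tF e m S = {0, 1} := by rw [tF, if_pos h]
    have hi0 : i0 e m S = 1 := by rw [i0, dif_pos h]
    have hT : (tF e m S).min ≤ ((0 : Fin (e+2)) : WithTop (Fin (e+2))) := by
      apply Finset.min_le
      rw [ht]
      exact Finset.mem_insert_self _ _
    have hne : (tF e m S).min ≠ ((i0 e m S : WithTop (Fin (e+2)))) := by
      intro hcon
      rw [hcon, hi0] at hT
      have h10 : (1 : Fin (e+2)) ≤ (0 : Fin (e+2)) := WithTop.coe_le_coe.mp hT
      rw [Fin.le_def] at h10
      simp at h10
    rw [if_neg hne, Finset.image_empty, Finset.union_empty]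
    have : Disjoint S (axesF e m) := by
      rw [Finset.disjoint_left]
      intro x hxS hxA
      obtain ⟨i, rfl⟩ := mem_axesF.mp hxA
      have : i ∈ uF e m S := Finset.mem_filter.mpr ⟨Finset.mem_univ i, hxS⟩
      rw [h] at this
      exact absurd this (Finset.notMem_empty i)
    exact Finset.sdiff_eq_self_of_disjoint this
  · have ht : tF e m S = uF e m S := by rw [tF, if_neg h]
    have hi0 : i0 e m S = (uF e m S).min' (Finset.nonempty_of_ne_empty h) := by
      rw [i0, dif_neg h]
    have heq : (tF e m S).min = ((i0 e m S : WithTop (Fin (e+2)))) := by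
      rw [ht, hi0, Finset.coe_min']
    rw [if_pos heq, ht]
    have himg : (uF e m S).image (fun i => (Pi.single i m : Fin (e+2) → ℕ)) = S ∩ axesF e m := by
      ext x
      simp only [Finset.mem_image, Finset.mem_inter]
      constructor
      · rintro ⟨i, hi, rfl⟩
        exact ⟨(Finset.mem_filter.mp hi).2, mem_axesF.mpr ⟨i, rfl⟩⟩
      · rintro ⟨hxS, hxA⟩
        obtain ⟨i, rfl⟩ := mem_axesF.mp hxA
        exact ⟨i, Finset.mem_filter.mpr ⟨Finset.mem_univ i, hxS⟩, rfl⟩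
    rw [himg, Finset.sdiff_union_inter]

end Construction

lemma coord_lt {d n : ℕ} {Q : Finset (Fin d → ℕ)} (hQ : IsLowerSet (↑Q : Set (Fin d → ℕ)))
    (hc : Q.card = n) {v : Fin d → ℕ} (hv : v ∈ Q) (i : Fin d) : v i < n := by
  have hsub : (Finset.range (v i + 1)).image (fun j => Function.update v i j) ⊆ Q := by
    intro w hw
    obtain ⟨j, hj, rfl⟩ := Finset.mem_image.mp hw
    rw [Finset.mem_range, Nat.lt_succ_iff] at hj
    refine hQ (fun k => ?_) hv
    by_cases hk : k = i
    · subst hk; rw [Function.update_self]; exact hj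
    · rw [Function.update_of_ne hk]
  have hcard := Finset.card_le_card hsub
  rw [Finset.card_image_of_injective _ (Function.update_injective v i), Finset.card_range,
    hc] at hcard
  omega

lemma finite_lower (d n : ℕ) :
    Finite {Q : Finset (Fin d → ℕ) // IsLowerSet (↑Q : Set (Fin d → ℕ)) ∧ Q.card = n} := by
  have hmem : ∀ Q : {Q : Finset (Fin d → ℕ) // IsLowerSet (↑Q : Set (Fin d → ℕ)) ∧ Q.card = n},
      Q.1 ∈ (Fintype.piFinset fun _ : Fin d => Finset.range n).powerset := by
    rintro ⟨Q, hQ, hc⟩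
    rw [Finset.mem_powerset]
    intro v hv
    exact Fintype.mem_piFinset.mpr fun i => Finset.mem_range.mpr (coord_lt hQ hc hv i)
  refine Finite.of_injective (fun Q =>
    (⟨Q.1, hmem Q⟩ : {s // s ∈ (Fintype.piFinset fun _ : Fin d => Finset.range n).powerset})) ?_
  intro a b hab
  have := congrArg (fun x => x.1) hab
  exact Subtype.ext this

theorem stmt_6 (d m n : ℕ) (hd : 2 ≤ d) (hn : 1 ≤ n) (h : Nat.choose (m + d) d < n) :
    2 ^ Nat.choose (m + d - 1) (d - 1) ≤ lowerCount d n := by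
  obtain ⟨e, rfl⟩ : ∃ e, d = e + 2 := ⟨d - 2, by omega⟩
  haveI hfin := finite_lower (e+2) n
  rw [lowerCount]
  rcases Nat.eq_zero_or_pos m with rfl | hm
  · -- m = 0 case
    have hexp : (0 + (e+2) - 1).choose ((e+2) - 1) = 1 := by
      have h1 : 0 + (e+2) - 1 = e+1 := by omega
      have h2 : (e+2) - 1 = e+1 := by omega
      rw [h1, h2, Nat.choose_self]
    rw [hexp, pow_one]
    have hn2 : 2 ≤ n := by
      have : (0 + (e+2)).choose (e+2) = 1 := by rw [Nat.zero_add, Nat.choose_self]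
      omega
    have hQ : ∀ i : Fin (e+2),
        IsLowerSet (↑((Finset.range n).image (fun k => (Pi.single i k : Fin (e+2) → ℕ))) :
          Set (Fin (e+2) → ℕ)) ∧
        ((Finset.range n).image (fun k => (Pi.single i k : Fin (e+2) → ℕ))).card = n := by
      intro i
      constructor
      · intro a b hba ha
        rw [Finset.mem_coe] at ha ⊢
        obtain ⟨k, hk, rfl⟩ := Finset.mem_image.mp ha
        rw [Finset.mem_range] at hk
        have hb : b = Pi.single i (b i) := le_single hba
        have hbi : b i ≤ k := by
          have := hba i; rwa [Pi.single_eq_same] at this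
        exact Finset.mem_image.mpr ⟨b i, Finset.mem_range.mpr (by omega), hb.symm⟩
      · rw [Finset.card_image_of_injOn, Finset.card_range]
        intro k _ k' _ hkk
        have := congrFun hkk i
        simpa using this
    let Q1 := (Finset.range n).image (fun k => (Pi.single (0 : Fin (e+2)) k : Fin (e+2) → ℕ))
    let Q2 := (Finset.range n).image (fun k => (Pi.single (1 : Fin (e+2)) k : Fin (e+2) → ℕ))
    have hQne : Q1 ≠ Q2 := by
      intro hcon
      have hmem1 : (Pi.single (0 : Fin (e+2)) 1 : Fin (e+2) → ℕ) ∈ Q1 :=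
        Finset.mem_image.mpr ⟨1, Finset.mem_range.mpr (by omega), rfl⟩
      rw [hcon] at hmem1
      obtain ⟨k, _, hk⟩ := Finset.mem_image.mp hmem1
      have h01 : (0 : Fin (e+2)) ≠ 1 := by
        intro hcon2
        have := congrArg Fin.val hcon2
        simp at this
      have := congrFun hk 0
      rw [Pi.single_eq_of_ne h01, Pi.single_eq_same] at this
      omega
    let g : Bool → {Q : Finset (Fin (e+2) → ℕ) //
        IsLowerSet (↑Q : Set (Fin (e+2) → ℕ)) ∧ Q.card = n} :=
      fun b => if b then ⟨Q1, hQ 0⟩ else ⟨Q2, hQ 1⟩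
    have hginj : Function.Injective g := by
      intro a b hab
      cases a <;> cases b
      · rfl
      · exfalso
        apply hQne
        have := congrArg Subtype.val hab
        simpa [g] using this.symm
      · exfalso
        apply hQne
        have := congrArg Subtype.val hab
        simpa [g] using this
      · rfl
    have := Nat.card_le_card_of_injective g hginj
    simpa using this
  · -- m ≥ 1 case
    have hn' : (m + (e+2)).choose (e+2) < n := h
    let f : {S // S ∈ (layerF (e+2) m).powerset} → {Q : Finset (Fin (e+2) → ℕ) //
        IsLowerSet (↑Q : Set (Fin (e+2) → ℕ)) ∧ Q.card = n} :=
      fun S => ⟨enc e m n S.1, enc_lower hm (Finset.mem_powerset.mp S.2),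
        enc_card hm hn' (Finset.mem_powerset.mp S.2)⟩
    have hinj : Function.Injective f := by
      intro S1 S2 hf
      have h1 : enc e m n S1.1 = enc e m n S2.1 := congrArg Subtype.val hf
      have h2 := congrArg (dec e m) h1
      rw [dec_enc hm hn' (Finset.mem_powerset.mp S1.2),
          dec_enc hm hn' (Finset.mem_powerset.mp S2.2)] at h2
      exact Subtype.ext h2
    have hcard := Nat.card_le_card_of_injective f hinj
    rw [Nat.card_eq_fintype_card (α := {S // S ∈ (layerF (e+2) m).powerset}),
      Fintype.card_coe, Finset.card_powerset] at hcard
    have hLc : (layerF (e+2) m).card = (m + (e+2) - 1).choose ((e+2) - 1) := by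
      rw [card_layerF]
      have h2 : (e+2) + m - 1 = m + e + 1 := by omega
      have h5 : m + (e+2) - 1 = m + e + 1 := by omega
      have h6 : (e+2) - 1 = e + 1 := by omega
      rw [h2, h5, h6]
      have h3 := Nat.choose_symm (show e+1 ≤ m+e+1 by omega)
      have h4 : m + e + 1 - (e+1) = m := by omega
      rw [h4] at h3
      exact h3
    rw [hLc] at hcard
    exact hcard
end

section
/- For all integers d ≥ 1 and m ≥ 0, one has C(m+d−1, d−1) ≥ (d/(d!)^{1/d}) · ((m+1)/(m+d)) · C(m+d, d)^{1−1/d}, where the powers are real powers. -/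
theorem stmt_7 (d m : ℕ) (hd : 1 ≤ d) :
    ((d : ℝ) / (Nat.factorial d : ℝ) ^ ((1 : ℝ) / (d : ℝ))) *
        (((m : ℝ) + 1) / ((m : ℝ) + (d : ℝ))) *
        (Nat.choose (m + d) d : ℝ) ^ (1 - 1 / (d : ℝ)) ≤
      (Nat.choose (m + d - 1) (d - 1) : ℝ) := by
  obtain ⟨k, rfl⟩ : ∃ k, d = k + 1 := ⟨d - 1, (Nat.succ_pred_eq_of_pos hd).symm⟩
  set d := k + 1
  have hd0 : (0:ℝ) < d := by positivity
  -- rewrite RHS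
  have hnat : (m + d) * Nat.choose (m + k) k = Nat.choose (m + d) d * d :=
    Nat.add_one_mul_choose_eq (m + k) k
  have hN1 : 1 ≤ Nat.choose (m + d) d := Nat.choose_pos (by omega)
  have hN : (1:ℝ) ≤ (Nat.choose (m + d) d : ℝ) := by exact_mod_cast hN1
  have hNpos : (0:ℝ) < (Nat.choose (m + d) d : ℝ) := by linarith
  have hmd : (0:ℝ) < (m:ℝ) + (d:ℝ) := by positivity
  have hRHS : (Nat.choose (m + d - 1) (d - 1) : ℝ) =
      (Nat.choose (m + d) d : ℝ) * d / ((m:ℝ) + d) := by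
    rw [eq_div_iff (ne_of_gt hmd)]
    have : ((m + d : ℕ) : ℝ) * (Nat.choose (m + k) k : ℝ)
        = (Nat.choose (m + d) d : ℝ) * (d : ℕ) := by exact_mod_cast congrArg (Nat.cast (R := ℝ)) hnat
    have h1 : m + d - 1 = m + k := by omega
    have h2 : d - 1 = k := by omega
    rw [h1, h2]
    push_cast at this ⊢
    linarith
  rw [hRHS]
  have hfpos : (0:ℝ) < (Nat.factorial d : ℝ) := by positivity
  have hfr : (0:ℝ) < (Nat.factorial d : ℝ) ^ ((1:ℝ)/(d:ℝ)) := Real.rpow_pos_of_pos hfpos _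
  -- key: (m+1)^d ≤ d! * N
  have hkey : ((m:ℝ) + 1) ^ (d:ℕ) ≤ (Nat.factorial d : ℝ) * (Nat.choose (m + d) d : ℝ) := by
    have h := Nat.pow_succ_le_ascFactorial (m+1) d
    rw [Nat.ascFactorial_eq_factorial_mul_choose] at h
    exact_mod_cast h
  set N : ℝ := (Nat.choose (m + d) d : ℝ) with hNdef
  -- deduce (m+1) ≤ (d!)^{1/d} * N^{1/d}
  have hstep : (m:ℝ) + 1 ≤ (Nat.factorial d : ℝ) ^ ((1:ℝ)/(d:ℝ)) * N ^ ((1:ℝ)/(d:ℝ)) := by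
    have h1 : ((m:ℝ)+1) = (((m:ℝ)+1) ^ (d:ℕ)) ^ ((1:ℝ)/(d:ℝ)) := by
      rw [← Real.rpow_natCast ((m:ℝ)+1) d, ← Real.rpow_mul (by positivity),
        mul_one_div, div_self (ne_of_gt hd0), Real.rpow_one]
    rw [h1, ← Real.mul_rpow (le_of_lt hfpos) (le_of_lt hNpos)]
    exact Real.rpow_le_rpow (by positivity) hkey (by positivity)
  -- combine
  have hsplit : N ^ ((1:ℝ)/(d:ℝ)) * N ^ (1 - 1/(d:ℝ)) = N := by
    rw [← Real.rpow_add hNpos]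
    ring_nf
    exact Real.rpow_one N
  have hpow_pos : (0:ℝ) < N ^ (1 - 1/(d:ℝ)) := Real.rpow_pos_of_pos hNpos _
  have hmain : ((m:ℝ)+1) * N ^ (1 - 1/(d:ℝ)) ≤ (Nat.factorial d : ℝ) ^ ((1:ℝ)/(d:ℝ)) * N := by
    calc ((m:ℝ)+1) * N ^ (1 - 1/(d:ℝ))
        ≤ ((Nat.factorial d : ℝ) ^ ((1:ℝ)/(d:ℝ)) * N ^ ((1:ℝ)/(d:ℝ))) * N ^ (1 - 1/(d:ℝ)) :=
          mul_le_mul_of_nonneg_right hstep (le_of_lt hpow_pos)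
      _ = (Nat.factorial d : ℝ) ^ ((1:ℝ)/(d:ℝ)) * N := by rw [mul_assoc, hsplit]
  -- finish
  have hfin : ((d:ℝ) / (Nat.factorial d : ℝ) ^ ((1:ℝ)/(d:ℝ))) * (((m:ℝ)+1) / ((m:ℝ)+(d:ℝ))) *
      N ^ (1 - 1/(d:ℝ)) =
      ((d:ℝ) / ((m:ℝ)+(d:ℝ))) * ((((m:ℝ)+1) * N ^ (1 - 1/(d:ℝ))) / (Nat.factorial d : ℝ) ^ ((1:ℝ)/(d:ℝ))) := by
    field_simp
  rw [hfin]
  have : (((m:ℝ)+1) * N ^ (1 - 1/(d:ℝ))) / (Nat.factorial d : ℝ) ^ ((1:ℝ)/(d:ℝ)) ≤ N := by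
    rw [div_le_iff₀ hfr]
    linarith [hmain]
  calc ((d:ℝ) / ((m:ℝ)+(d:ℝ))) * ((((m:ℝ)+1) * N ^ (1 - 1/(d:ℝ))) / (Nat.factorial d : ℝ) ^ ((1:ℝ)/(d:ℝ)))
      ≤ ((d:ℝ) / ((m:ℝ)+(d:ℝ))) * N := mul_le_mul_of_nonneg_left this (by positivity)
    _ = N * d / ((m:ℝ)+d) := by ring
end

section
/- For all integers d ≥ 2 and m ≥ 0, one has C(m+d−1, d−1) > (d/(d!)^{1/d}) · C(m+d+1, d)^{1−1/d} · (1 − d/(m+d+1))², where the powers are real powers. -/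
/-! Raising both sides to the power `d = k + 1` removes the real exponents. With `a = C(m+k, k)`,
the identity `C(m+k+2, k+1) (k+1) (m+1) = (m+k+2) (m+k+1) a` expresses `C(m+d+1, d)` through `a`,
and `(m+1)^k ≤ k! a` trades the factorial for `a`; what is left is
`(m+k+1)^k (m+1)^2 < (m+k+2)^(k+2)`. -/

open Nat

theorem Nat.choose_add_two_mul_succ_mul_succ (m k : ℕ) :
    (m + k + 2).choose (k + 1) * (k + 1) * (m + 1) =
      (m + k + 2) * (m + k + 1) * (m + k).choose k := by
  have h₁ := Nat.add_one_mul_choose_eq (m + k) k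
  have h₂ := Nat.add_one_mul_choose_eq (m + k + 1) m
  rw [Nat.choose_symm_of_eq_add (by ring : m + k + 1 = m + (k + 1)),
    Nat.choose_symm_of_eq_add (by ring : m + k + 1 + 1 = (m + 1) + (k + 1))] at h₂
  linear_combination (k + 1) * h₂.symm + (m + k + 2) * h₁.symm

theorem Nat.succ_pow_le_factorial_mul_choose (m k : ℕ) :
    (m + 1) ^ k ≤ k ! * (m + k).choose k := by
  have h := Nat.pow_sub_le_descFactorial (m + k) k
  rwa [Nat.descFactorial_eq_factorial_mul_choose, show m + k + 1 - k = m + 1 by omega] at h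

theorem Nat.succ_pow_mul_choose_pow_mul_lt (m k : ℕ) :
    (k + 1) ^ (k + 1) * (m + k + 2).choose (k + 1) ^ k * (m + 1) ^ (2 * (k + 1)) <
      (m + k).choose k ^ (k + 1) * ((m + k + 2) ^ (2 * (k + 1)) * (k + 1)!) := by
  set a := (m + k).choose k
  have ha : 0 < a := Nat.choose_pos (Nat.le_add_left k m)
  have hsq : (m + k + 1) ^ k * (m + 1) ^ 2 < (m + k + 2) ^ k * (m + k + 2) ^ 2 :=
    Nat.mul_lt_mul_of_le_of_lt (Nat.pow_le_pow_left (by omega) k)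
      (Nat.pow_lt_pow_left (by omega) (by norm_num)) (by positivity)
  refine lt_of_mul_lt_mul_right (a := ((k + 1) * (m + 1)) ^ k) ?_ (Nat.zero_le _)
  calc (k + 1) ^ (k + 1) * (m + k + 2).choose (k + 1) ^ k * (m + 1) ^ (2 * (k + 1)) *
        ((k + 1) * (m + 1)) ^ k
      = (k + 1) ^ (k + 1) * ((m + k + 2).choose (k + 1) * (k + 1) * (m + 1)) ^ k *
          (m + 1) ^ (2 * (k + 1)) := by simp only [mul_pow]; ring
    _ = a ^ k * (k + 1) ^ (k + 1) * (m + k + 2) ^ k * (m + 1) ^ (2 * k) *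
          ((m + k + 1) ^ k * (m + 1) ^ 2) := by
        rw [Nat.choose_add_two_mul_succ_mul_succ]; simp only [mul_pow]; ring
    _ < a ^ k * (k + 1) ^ (k + 1) * (m + k + 2) ^ k * (m + 1) ^ (2 * k) *
          ((m + k + 2) ^ k * (m + k + 2) ^ 2) := by gcongr
    _ = a ^ k * (k + 1) ^ (k + 1) * (m + k + 2) ^ (2 * (k + 1)) * (m + 1) ^ k * (m + 1) ^ k := by
        ring
    _ ≤ a ^ k * (k + 1) ^ (k + 1) * (m + k + 2) ^ (2 * (k + 1)) * (m + 1) ^ k * (k ! * a) := by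
        gcongr; exact Nat.succ_pow_le_factorial_mul_choose m k
    _ = a ^ (k + 1) * ((m + k + 2) ^ (2 * (k + 1)) * (k + 1)!) * ((k + 1) * (m + 1)) ^ k := by
        rw [Nat.factorial_succ, mul_pow]; ring

theorem Real.rpow_div_natCast_pow {x : ℝ} (hx : 0 ≤ x) (k : ℕ) {n : ℕ} (hn : n ≠ 0) :
    (x ^ ((k : ℝ) / n)) ^ n = x ^ k := by
  rw [← Real.rpow_natCast, ← Real.rpow_mul hx, div_mul_cancel₀ _ (Nat.cast_ne_zero.2 hn),
    Real.rpow_natCast]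

theorem stmt_8 (d m : ℕ) (hd : 2 ≤ d) :
    ((d : ℝ) / (Nat.factorial d : ℝ) ^ ((1 : ℝ) / (d : ℝ))) *
        (Nat.choose (m + d + 1) d : ℝ) ^ (1 - 1 / (d : ℝ)) *
        (1 - (d : ℝ) / ((m : ℝ) + (d : ℝ) + 1)) ^ 2 <
      (Nat.choose (m + d - 1) (d - 1) : ℝ) := by
  obtain ⟨k, rfl⟩ : ∃ k, d = k + 1 := ⟨d - 1, by omega⟩
  have hexp : (1 : ℝ) - 1 / ((k + 1 : ℕ) : ℝ) = (k : ℝ) / ((k + 1 : ℕ) : ℝ) := by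
    field_simp; push_cast; ring
  have hq : 1 - ((k + 1 : ℕ) : ℝ) / ((m : ℝ) + ((k + 1 : ℕ) : ℝ) + 1) =
      ((m + 1 : ℕ) : ℝ) / ((m + k + 2 : ℕ) : ℝ) := by
    push_cast; field_simp; ring
  rw [hexp, hq, ← Nat.cast_one (R := ℝ), show m + (k + 1) + 1 = m + k + 2 by ring,
    show m + (k + 1) - 1 = m + k by omega, Nat.add_sub_cancel]
  refine lt_of_pow_lt_pow_left₀ (k + 1) (Nat.cast_nonneg _) ?_
  rw [mul_pow, mul_pow, div_pow, Real.rpow_div_natCast_pow (Nat.cast_nonneg _) _ k.succ_ne_zero,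
    Real.rpow_div_natCast_pow (Nat.cast_nonneg _) _ k.succ_ne_zero, pow_one, ← pow_mul, div_pow,
    div_mul_eq_mul_div, div_mul_eq_mul_div, ← mul_div_assoc, div_div, div_lt_iff₀ (by positivity)]
  exact_mod_cast Nat.succ_pow_mul_choose_pow_mul_lt m k
end

section
/- For every integer d ≥ 3 and every integer n with 1 ≤ n < (2.6·d)^d, one has n·ln d ≤ π·√(2/3)·d^{ln d}·n^{1−1/d}; consequently p_d(n) ≤ exp( π·√(2/3)·d^{ln d}·n^{1−1/d} ). -/
/-!
Remove the lexicographically largest point `M` from a lower set `Q ⊆ ℕ^d` with `n ≥ 2` points.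
What remains is again a lower set, and `M` is recovered from it and a single coordinate `j`: the
points `M - e_k` (for `M k ≠ 0`) stay in the set, so they lie lexicographically below the new
maximum `M'`, which forces `M` to agree with `M'` before `j`, to exceed it by one at `j` and to
vanish after `j`. Hence `p_d(n + 1) ≤ d ^ n`, and the first inequality bounds
`d ^ n = exp (n log d)`.

For the numerical part, `n < (2.6 d)^d` gives `n ^ (1/d) ≤ 2.6 d`, and with `t = log d ≥ log 3`
the inequality `2.6 d log d ≤ π √(2/3) d ^ log d` reads `2.6 t ≤ π √(2/3) exp (t² - t)`,
which follows from `exp u ≥ 1 + u + u² / 2` and `π √(2/3) > 2.565`.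
-/

open Real

section LexMax

variable {ι : Type*} [LinearOrder ι] [WellFoundedLT ι]

noncomputable def lexMax (Q : Finset (ι → ℕ)) : ι → ℕ := ofLex (Q.sup toLex)

lemma lexMax_mem {Q : Finset (ι → ℕ)} (hQ : Q.Nonempty) : lexMax Q ∈ Q := by
  obtain ⟨x, hx, hsup⟩ := Q.exists_mem_eq_sup hQ toLex
  rwa [lexMax, hsup]

lemma toLex_le_lexMax {Q : Finset (ι → ℕ)} {x : ι → ℕ} (hx : x ∈ Q) :
    toLex x ≤ toLex (lexMax Q) :=
  Q.le_sup (f := toLex) hx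

lemma IsLowerSet.erase_lexMax [DecidableEq (ι → ℕ)] {Q : Finset (ι → ℕ)}
    (hQ : IsLowerSet (Q : Set (ι → ℕ))) :
    IsLowerSet ((Q.erase (lexMax Q) : Finset (ι → ℕ)) : Set (ι → ℕ)) := by
  intro x y hyx hx
  rw [Finset.mem_coe, Finset.mem_erase] at hx ⊢
  refine ⟨fun hy => hx.1 ?_, hQ hyx hx.2⟩
  subst hy
  exact toLex.injective ((toLex_le_lexMax hx.2).antisymm (Pi.toLex_monotone hyx))

def lexBump (x : ι → ℕ) (j : ι) : ι → ℕ :=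
  fun i => if i < j then x i else if i = j then x i + 1 else 0

lemma exists_lexMax_eq_lexBump [DecidableEq (ι → ℕ)] {Q : Finset (ι → ℕ)}
    (hQ : IsLowerSet (Q : Set (ι → ℕ))) (hcard : 1 < Q.card) :
    ∃ j, lexMax Q = lexBump (lexMax (Q.erase (lexMax Q))) j := by
  set M := lexMax Q
  set M' := lexMax (Q.erase M)
  have hM : M ∈ Q := lexMax_mem (Finset.card_pos.1 (by omega))
  have hM' : M' ∈ Q.erase M :=
    lexMax_mem (Finset.card_pos.1 (by rw [Finset.card_erase_of_mem hM]; omega))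
  have hlt : toLex M' < toLex M :=
    (toLex_le_lexMax (Finset.mem_of_mem_erase hM')).lt_of_ne
      (toLex.injective.ne (Finset.ne_of_mem_erase hM'))
  obtain ⟨j, hpre, hj⟩ : ∃ j, (∀ i < j, M' i = M i) ∧ M' j < M j := hlt
  have hdec : ∀ k, M k ≠ 0 → toLex (Function.update M k (M k - 1)) ≤ toLex M' := by
    intro k hk
    refine toLex_le_lexMax (Finset.mem_erase.2 ⟨fun h => ?_, hQ ?_ hM⟩)
    · have := congrFun h k
      simp only [Function.update_self] at this
      omega
    · exact update_le_self_iff.2 (Nat.sub_le _ _)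
  have hMj : M j = M' j + 1 := by
    have := Pi.apply_le_of_toLex (hdec j (by omega)) (i := j) fun i hi => by
      rw [Function.update_of_ne hi.ne, hpre i hi]
    simp only [Function.update_self] at this
    omega
  have hzero : ∀ k, j < k → M k = 0 := by
    intro k hk
    by_contra hMk
    have := Pi.apply_le_of_toLex (hdec k hMk) (i := j) fun i hi => by
      rw [Function.update_of_ne (hi.trans hk).ne, hpre i hi]
    rw [Function.update_of_ne hk.ne] at this
    omega
  refine ⟨j, funext fun i => ?_⟩
  rcases lt_trichotomy i j with hi | rfl | hi
  · simp [lexBump, hi, hpre i hi]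
  · simp [lexBump, hMj]
  · simp [lexBump, hi.not_gt, hi.ne', hzero i hi]

end LexMax

section Counting

def lowerFinsetsOfCard (ι : Type*) (n : ℕ) : Set (Finset (ι → ℕ)) :=
  {Q | IsLowerSet (Q : Set (ι → ℕ)) ∧ Q.card = n}

variable {ι : Type*}

lemma encard_lowerFinsetsOfCard_le_one {n : ℕ} (hn : n ≤ 1) :
    (lowerFinsetsOfCard ι n).encard ≤ 1 := by
  have hsingleton : ∀ Q ∈ lowerFinsetsOfCard ι 1, Q = {0} := by
    rintro Q ⟨hQ, hcard⟩
    obtain ⟨x, rfl⟩ := Finset.card_eq_one.1 hcard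
    have : (0 : ι → ℕ) ∈ ({x} : Finset (ι → ℕ)) :=
      hQ (zero_le : 0 ≤ x) (Finset.mem_singleton_self x)
    rw [Finset.mem_singleton.1 this]
  rw [Set.encard_le_one_iff]
  intro Q₁ Q₂ h₁ h₂
  interval_cases n
  · rw [Finset.card_eq_zero.1 h₁.2, Finset.card_eq_zero.1 h₂.2]
  · rw [hsingleton Q₁ h₁, hsingleton Q₂ h₂]

lemma encard_lowerFinsetsOfCard_succ_le [LinearOrder ι] [WellFoundedLT ι] (n : ℕ) :
    (lowerFinsetsOfCard ι (n + 1)).encard ≤ ENat.card ι ^ n := by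
  classical
  induction n with
  | zero => simpa using encard_lowerFinsetsOfCard_le_one le_rfl
  | succ n ih =>
    have hcover : lowerFinsetsOfCard ι (n + 2) ⊆
        (fun p : ι × Finset (ι → ℕ) => insert (lexBump (lexMax p.2) p.1) p.2) ''
          (Set.univ ×ˢ lowerFinsetsOfCard ι (n + 1)) := by
      rintro Q ⟨hQ, hcard⟩
      obtain ⟨j, hj⟩ := exists_lexMax_eq_lexBump hQ (by omega)
      have hM : lexMax Q ∈ Q := lexMax_mem (Finset.card_pos.1 (by omega))
      refine ⟨(j, Q.erase (lexMax Q)), ⟨trivial, hQ.erase_lexMax, ?_⟩, ?_⟩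
      · rw [Finset.card_erase_of_mem hM, hcard]; rfl
      · exact (congrArg (insert · _) hj.symm).trans (Finset.insert_erase hM)
    calc (lowerFinsetsOfCard ι (n + 2)).encard
        ≤ (Set.univ ×ˢ lowerFinsetsOfCard ι (n + 1)).encard :=
          (Set.encard_le_encard hcover).trans (Set.encard_image_le _ _)
      _ = ENat.card ι * (lowerFinsetsOfCard ι (n + 1)).encard := by
          rw [Set.encard_prod, Set.encard_univ]
      _ ≤ ENat.card ι ^ (n + 1) := by
          rw [pow_succ']
          gcongr

end Counting

lemma lowerCount_le_pow {d : ℕ} (hd : 0 < d) (n : ℕ) : lowerCount d n ≤ d ^ n := by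
  refine ENat.toNat_le_of_le_natCast ?_
  change (lowerFinsetsOfCard (Fin d) n).encard ≤ _
  rcases n with _ | n
  · simpa using encard_lowerFinsetsOfCard_le_one zero_le_one
  · calc (lowerFinsetsOfCard (Fin d) (n + 1)).encard ≤ ENat.card (Fin d) ^ n :=
          encard_lowerFinsetsOfCard_succ_le n
      _ ≤ ((d ^ (n + 1) : ℕ) : ℕ∞) := by
          rw [ENat.card_eq_coe_fintype_card, Fintype.card_fin]
          exact_mod_cast Nat.pow_le_pow_right hd n.le_succ

lemma pi_mul_sqrt_two_thirds_gt : 2.565 < π * √(2 / 3) := by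
  have hsqrt : 0.81649 < √(2 / 3) := lt_sqrt_of_sq_lt (by norm_num)
  nlinarith [pi_gt_d6]

lemma mul_mul_log_le_pi_mul_sqrt_mul_rpow_log {x : ℝ} (hx : 3 ≤ x) :
    2.6 * x * log x ≤ π * √(2 / 3) * x ^ log x := by
  obtain ⟨t, rfl⟩ : ∃ t, exp t = x := ⟨log x, exp_log (by linarith)⟩
  have ht : 1.0986 < t := by
    rw [← log_exp t]
    exact log_three_gt_d9.trans_le' (by norm_num) |>.trans_le (log_le_log (by norm_num) hx)
  have hu : 0 ≤ t * t - t := by nlinarith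
  calc 2.6 * exp t * log (exp t) = exp t * (2.6 * t) := by rw [log_exp]; ring
    _ ≤ exp t * (π * √(2 / 3) * exp (t * t - t)) := by
      gcongr exp t * ?_
      calc 2.6 * t
          ≤ 2.565 * (1 + (t * t - t) + (t * t - t) ^ 2 / 2) := by
            nlinarith [mul_pos (sub_pos.2 ht) (sub_pos.2 ht)]
        _ ≤ π * √(2 / 3) * exp (t * t - t) := by
          gcongr
          exacts [pi_mul_sqrt_two_thirds_gt.le, quadratic_le_exp_of_nonneg hu]
    _ = π * √(2 / 3) * exp t ^ log (exp t) := by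
      rw [log_exp, ← exp_mul, mul_left_comm, ← exp_add, add_sub_cancel]

theorem stmt_12_general (d n : ℕ) (hd : 3 ≤ d) (h : (n : ℝ) < (2.6 * (d : ℝ)) ^ d) :
    (n : ℝ) * Real.log d ≤
        Real.pi * Real.sqrt (2 / 3) * (d : ℝ) ^ Real.log d * (n : ℝ) ^ (1 - 1 / (d : ℝ)) ∧
      (lowerCount d n : ℝ) ≤
        Real.exp (Real.pi * Real.sqrt (2 / 3) * (d : ℝ) ^ Real.log d *
          (n : ℝ) ^ (1 - 1 / (d : ℝ))) := by
  have hd3 : (3 : ℝ) ≤ d := by exact_mod_cast hd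
  have hd0 : (0 : ℝ) < d := by linarith
  have hroot : (n : ℝ) ^ (1 / (d : ℝ)) ≤ 2.6 * d := by
    rw [one_div, rpow_inv_le_iff_of_pos n.cast_nonneg (by positivity) hd0,
      rpow_natCast]
    exact h.le
  have hbound :
      (n : ℝ) * log d ≤ π * √(2 / 3) * (d : ℝ) ^ log d * (n : ℝ) ^ (1 - 1 / (d : ℝ)) :=
    calc (n : ℝ) * log d
        = (n : ℝ) ^ (1 / (d : ℝ)) * log d * (n : ℝ) ^ (1 - 1 / (d : ℝ)) := by
          rw [mul_right_comm, ← rpow_add' n.cast_nonneg (by norm_num), add_sub_cancel,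
            rpow_one]
      _ ≤ 2.6 * d * log d * (n : ℝ) ^ (1 - 1 / (d : ℝ)) := by gcongr
      _ ≤ _ := by grw [mul_mul_log_le_pi_mul_sqrt_mul_rpow_log hd3]
  refine ⟨hbound, ?_⟩
  calc (lowerCount d n : ℝ) ≤ (d : ℝ) ^ n := by exact_mod_cast lowerCount_le_pow (by omega) n
    _ = exp (n * log d) := by rw [← rpow_natCast, rpow_def_of_pos hd0, mul_comm]
    _ ≤ _ := exp_le_exp.2 hbound

theorem stmt_12 (d n : ℕ) (hd : 3 ≤ d) (hn : 1 ≤ n) (h : (n : ℝ) < (2.6 * (d : ℝ)) ^ d) :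
    (n : ℝ) * Real.log d ≤
        Real.pi * Real.sqrt (2 / 3) * (d : ℝ) ^ Real.log d * (n : ℝ) ^ (1 - 1 / (d : ℝ)) ∧
      (lowerCount d n : ℝ) ≤
        Real.exp (Real.pi * Real.sqrt (2 / 3) * (d : ℝ) ^ Real.log d *
          (n : ℝ) ^ (1 - 1 / (d : ℝ))) :=
  stmt_12_general d n hd h
end

section
/- For every integer d ≥ 2 and every integer n ≥ 1, letting m = d·⌊n^{1/d}⌋ (floor of the real d-th root of n), one has p_d(n) ≤ d^m · Σ_λ Π_i p_{d−1}(λ_i), where the sum runs over all integer partitions λ of n into at most m positive parts λ_1 ≥ λ_2 ≥ ... and the product runs over the parts of λ. -/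
open Finset Function

theorem exists_equiv_fin_strictMono_comp {S α : Type*} [Fintype S] [LinearOrder α]
    {key : S → α} (hkey : Injective key) {m : ℕ} (hm : Fintype.card S = m) :
    ∃ π : Fin m ≃ S, StrictMono (key ∘ π) := by
  classical
  let iso := Fintype.orderIsoFinOfCardEq (Set.range key)
    ((Set.card_range_of_injective hkey).trans hm)
  refine ⟨iso.toEquiv.trans (Equiv.ofInjective key hkey).symm, fun l l' hll' => ?_⟩
  simpa [Equiv.apply_ofInjective_symm] using iso.strictMono hll'

theorem exists_equiv_fin_antitone_comp {ι κ β : Type*} [Fintype ι] [LinearOrder ι]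
    [Fintype κ] [LinearOrder κ] [LinearOrder β] {m : ℕ} (hm : Fintype.card (ι × κ) = m)
    (σ : ι × κ → β) (hσ : ∀ i, Antitone fun j => σ (i, j)) :
    ∃ π : Fin m ≃ ι × κ, Antitone (σ ∘ π) ∧ ∀ i, StrictMono fun j => π.symm (i, j) := by
  -- sort the cells by decreasing `σ`, breaking ties lexicographically
  let key : ι × κ → βᵒᵈ ×ₗ (ι ×ₗ κ) := fun s => toLex (OrderDual.toDual (σ s), toLex s)
  have hkey : Injective key := fun s s' h => by simpa [key] using congrArg (fun x => (ofLex x).2) h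
  have hrow (i : ι) : StrictMono fun j => key (i, j) := fun j j' hjj' => by
    rcases (hσ i hjj'.le).lt_or_eq with hlt | heq
    · exact Prod.Lex.toLex_lt_toLex.2 (Or.inl hlt)
    · exact Prod.Lex.toLex_lt_toLex.2 (Or.inr ⟨congrArg OrderDual.toDual heq.symm,
        Prod.Lex.toLex_lt_toLex.2 (Or.inr ⟨rfl, hjj'⟩)⟩)
  obtain ⟨π, hπ⟩ := exists_equiv_fin_strictMono_comp hkey hm
  refine ⟨π, fun l l' hll' => ?_, fun i j j' hjj' => ?_⟩
  · by_contra! hlt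
    have : key (π l') < key (π l) := Prod.Lex.toLex_lt_toLex.2 (Or.inl hlt)
    exact (hπ.lt_iff_lt.1 this).not_ge hll'
  · rw [← hπ.lt_iff_lt]
    simpa using hrow i hjj'

def rank {α : Type*} [DecidableEq α] {m : ℕ} (c : Fin m → α) (l : Fin m) : ℕ :=
  #{l' | l' < l ∧ c l' = c l}

theorem snd_eq_rank {ι : Type*} [DecidableEq ι] {t m : ℕ} (π : Fin m ≃ ι × Fin t)
    (hπ : ∀ i, StrictMono fun j => π.symm (i, j)) (l : Fin m) :
    ((π l).2 : ℕ) = rank (Prod.fst ∘ π) l := by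
  rcases hl : π l with ⟨i, j⟩
  have hrow : ({l' | l' < l ∧ (π l').1 = i} : Finset (Fin m)) =
      (Iio j).map ⟨fun j' => π.symm (i, j'), (hπ i).injective⟩ := by
    ext l'
    simp only [mem_filter, mem_univ, true_and, mem_map, mem_Iio, Embedding.coeFn_mk]
    rw [← π.symm_apply_apply l, hl]
    constructor
    · rintro ⟨hlt, rfl⟩
      refine ⟨(π l').2, ?_, by simp⟩
      rw [← (hπ (π l').1).lt_iff_lt]
      simpa using hlt
    · rintro ⟨j', hj', rfl⟩
      exact ⟨hπ i hj', by simp⟩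
  simp [rank, hl, hrow]

theorem Antitone.eq_of_map_univ_eq {m : ℕ} {β : Type*} [LinearOrder β] {f g : Fin m → β}
    (hf : Antitone f) (hg : Antitone g) (h : univ.val.map f = univ.val.map g) : f = g := by
  rw [Fin.univ_val_map, Fin.univ_val_map, Multiset.coe_eq_coe] at h
  exact List.ofFn_injective <| List.Perm.eq_of_pairwise' (r := (· ≥ ·))
    (List.pairwise_ofFn.2 fun _ _ hij => hf hij.le)
    (List.pairwise_ofFn.2 fun _ _ hij => hg hij.le) h

theorem Multiset.eq_of_card_eq_of_filter_ne_zero_eq {s s' : Multiset ℕ} (hcard : card s = card s')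
    (h : s.filter (· ≠ 0) = s'.filter (· ≠ 0)) : s = s' := by
  have hs := congrArg card (Multiset.filter_add_not (· = 0) s)
  have hs' := congrArg card (Multiset.filter_add_not (· = 0) s')
  have hzero (u : Multiset ℕ) : u.filter (· = 0) = replicate (card (u.filter (· = 0))) 0 :=
    Multiset.eq_replicate.2 ⟨rfl, fun _ hb => (Multiset.mem_filter.1 hb).2⟩
  rw [← Multiset.filter_add_not (· = 0) s, ← Multiset.filter_add_not (· = 0) s', hzero s,
    hzero s']
  simp only [card_add, ne_eq] at hs hs' h ⊢
  rw [h] at hs ⊢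
  congr 2
  omega

abbrev PaddedPartition (m n : ℕ) := {f : Fin m → ℕ // Antitone f ∧ ∑ l, f l = n}

namespace PaddedPartition

variable {m n : ℕ}

def toPartition (f : PaddedPartition m n) : Nat.Partition n :=
  Nat.Partition.ofSums n (univ.val.map f.1) ((sum_eq_multiset_sum _ _).symm.trans f.2.2)

theorem toPartition_injective : Injective (toPartition : PaddedPartition m n → _) := by
  intro f g h
  refine Subtype.ext (f.2.1.eq_of_map_univ_eq g.2.1 ?_)
  refine Multiset.eq_of_card_eq_of_filter_ne_zero_eq (by simp) ?_
  simpa [toPartition, Nat.Partition.ext_iff] using h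

theorem card_parts_toPartition_le (f : PaddedPartition m n) :
    Multiset.card (toPartition f).parts ≤ m := by
  simpa [toPartition] using Multiset.card_le_card (Multiset.filter_le (· ≠ 0) (univ.val.map f.1))

theorem prod_map_parts_toPartition {M : Type*} [CommMonoid M] {g : ℕ → M} (hg : g 0 = 1)
    (f : PaddedPartition m n) : ((toPartition f).parts.map g).prod = ∏ l, g (f.1 l) := by
  rw [← prod_filter_of_ne (p := fun l => f.1 l ≠ 0) fun l _ hl => by contrapose! hl; simp [hl, hg]]
  rw [toPartition, Nat.Partition.ofSums_parts, Multiset.filter_map, Multiset.map_map,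
    Finset.prod_eq_multiset_prod, Finset.filter_val]
  rfl

instance : Finite (PaddedPartition m n) := Finite.of_injective _ toPartition_injective

noncomputable instance : Fintype (PaddedPartition m n) := Fintype.ofFinite _

theorem sum_prod_le {M : Type*} [CommSemiring M] [PartialOrder M] [CanonicallyOrderedAdd M]
    {g : ℕ → M} (hg : g 0 = 1) :
    ∑ f : PaddedPartition m n, ∏ l, g (f.1 l) ≤
      ∑ p ∈ univ.filter (fun p : Nat.Partition n => Multiset.card p.parts ≤ m),
        (p.parts.map g).prod :=
  calc ∑ f : PaddedPartition m n, ∏ l, g (f.1 l)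
      = ∑ p ∈ univ.map ⟨toPartition (m := m), toPartition_injective⟩, (p.parts.map g).prod := by
        rw [sum_map]
        simp [prod_map_parts_toPartition hg]
    _ ≤ _ := sum_le_sum_of_subset <| by
        simp only [subset_iff, mem_map, mem_filter, mem_univ, true_and]
        rintro _ ⟨f, -, rfl⟩
        exact card_parts_toPartition_le f

end PaddedPartition

theorem prod_add_one_le_card {ι : Type*} [Fintype ι] [DecidableEq ι] {Q : Finset (ι → ℕ)}
    (hQ : IsLowerSet (Q : Set (ι → ℕ))) {k : ι → ℕ} (hk : k ∈ Q) : ∏ i, (k i + 1) ≤ Q.card :=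
  calc ∏ i, (k i + 1) = (Fintype.piFinset fun i => range (k i + 1)).card := by simp
    _ ≤ Q.card := card_le_card fun x hx => hQ (by simpa [Nat.lt_succ_iff, Pi.le_def] using hx) hk

theorem exists_lt_of_card_lt_pow {ι : Type*} [Fintype ι] [DecidableEq ι] {Q : Finset (ι → ℕ)}
    (hQ : IsLowerSet (Q : Set (ι → ℕ))) {t : ℕ} (hcard : Q.card < (t + 1) ^ Fintype.card ι)
    {k : ι → ℕ} (hk : k ∈ Q) : ∃ i, k i < t := by
  by_contra! h
  have : (t + 1) ^ Fintype.card ι ≤ ∏ i, (k i + 1) := by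
    simpa using prod_le_prod' (s := univ) fun i _ => Nat.succ_le_succ (h i)
  exact (this.trans (prod_add_one_le_card hQ hk)).not_gt hcard

abbrev LowerSets (d n : ℕ) :=
  {Q : Finset (Fin d → ℕ) // IsLowerSet (Q : Set (Fin d → ℕ)) ∧ Q.card = n}

instance (d n : ℕ) : Finite (LowerSets d n) := by
  classical
  let box : Finset (Fin d → ℕ) := Fintype.piFinset fun _ => range n
  refine Finite.of_injective (fun Q : LowerSets d n => (⟨Q.1, ?_⟩ : box.powerset)) ?_
  · refine mem_powerset.2 fun k hk => Fintype.mem_piFinset.2 fun i => mem_range.2 ?_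
    calc k i < k i + 1 := Nat.lt_succ_self _
      _ ≤ ∏ i, (k i + 1) :=
        single_le_prod' (f := fun i => k i + 1) (fun _ _ => Nat.succ_pos _) (mem_univ i)
      _ ≤ n := Q.2.2 ▸ prod_add_one_le_card Q.2.1 hk
  · intro Q Q' h
    simpa [Subtype.ext_iff] using h

noncomputable instance (d n : ℕ) : Fintype (LowerSets d n) := Fintype.ofFinite _

theorem lowerCount_eq_card (d n : ℕ) : lowerCount d n = Fintype.card (LowerSets d n) :=
  Nat.card_eq_fintype_card

theorem lowerCount_zero (d : ℕ) : lowerCount d 0 = 1 := by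
  rw [lowerCount_eq_card, Fintype.card_eq_one_iff]
  exact ⟨⟨∅, by simpa using isLowerSet_empty, rfl⟩, fun Q => Subtype.ext (card_eq_zero.1 Q.2.2)⟩

namespace LowerCount

variable {e : ℕ} (t : ℕ)

/-- The points `k` with `k i = j` and `t ≤ k i'` for all `i' < i`, parametrised by `ℕ^e`: the
earlier coordinates are shifted down by `t`, so that lower sets correspond to lower sets. -/
def liftAt (i : Fin (e + 1)) (j : ℕ) (r : Fin e → ℕ) : Fin (e + 1) → ℕ :=
  i.insertNth j fun l => if i.succAbove l < i then r l + t else r l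

variable {t}

@[simp]
theorem liftAt_apply_self (i : Fin (e + 1)) (j : ℕ) (r : Fin e → ℕ) : liftAt t i j r i = j := by
  simp [liftAt]

theorem liftAt_apply_succAbove (i : Fin (e + 1)) (j : ℕ) (r : Fin e → ℕ) (l : Fin e) :
    liftAt t i j r (i.succAbove l) = if i.succAbove l < i then r l + t else r l := by
  simp [liftAt]

theorem liftAt_injective (i : Fin (e + 1)) (j : ℕ) : Injective (liftAt t i j) := by
  intro r r' h
  funext l
  have := congrFun h (i.succAbove l)
  simp only [liftAt_apply_succAbove] at this
  split_ifs at this <;> omega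

theorem liftAt_mono {i : Fin (e + 1)} {j j' : ℕ} {r r' : Fin e → ℕ} (hj : j ≤ j') (hr : r ≤ r') :
    liftAt t i j r ≤ liftAt t i j' r' := by
  intro x
  induction x using Fin.succAboveCases i with
  | x => simpa using hj
  | p l =>
    simp only [liftAt_apply_succAbove]
    split_ifs <;> simp [hr l]

theorem le_liftAt_of_lt {i i' : Fin (e + 1)} (j : ℕ) (r : Fin e → ℕ) (h : i' < i) :
    t ≤ liftAt t i j r i' := by
  obtain ⟨l, rfl⟩ := Fin.exists_succAbove_eq h.ne
  simp [liftAt_apply_succAbove, h]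

theorem exists_liftAt_eq {i : Fin (e + 1)} {k : Fin (e + 1) → ℕ} (hk : ∀ i' < i, t ≤ k i') :
    ∃ r, liftAt t i (k i) r = k := by
  refine ⟨fun l => if i.succAbove l < i then k (i.succAbove l) - t else k (i.succAbove l), ?_⟩
  funext x
  induction x using Fin.succAboveCases i with
  | x => simp
  | p l =>
    simp only [liftAt_apply_succAbove]
    split_ifs with h
    · have := hk _ h; omega
    · rfl

theorem eq_of_liftAt_eq {i i' : Fin (e + 1)} {j j' : ℕ} {r r' : Fin e → ℕ} (hj : j < t)
    (hj' : j' < t) (h : liftAt t i j r = liftAt t i' j' r') : i = i' ∧ j = j' := by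
  have hi : i = i' := by
    rcases lt_trichotomy i i' with hlt | heq | hgt
    · have := le_liftAt_of_lt (t := t) j' r' hlt
      rw [← h, liftAt_apply_self] at this
      omega
    · exact heq
    · have := le_liftAt_of_lt (t := t) j r hgt
      rw [h, liftAt_apply_self] at this
      omega
  subst hi
  simpa using congrFun h i

variable (t) in
noncomputable def layer (Q : Finset (Fin (e + 1) → ℕ)) (i : Fin (e + 1)) (j : ℕ) :
    Finset (Fin e → ℕ) :=
  Q.preimage (liftAt t i j) (liftAt_injective i j).injOn

variable {Q : Finset (Fin (e + 1) → ℕ)}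

@[simp]
theorem mem_layer {i : Fin (e + 1)} {j : ℕ} {r : Fin e → ℕ} :
    r ∈ layer t Q i j ↔ liftAt t i j r ∈ Q :=
  mem_preimage

theorem isLowerSet_layer (hQ : IsLowerSet (Q : Set (Fin (e + 1) → ℕ))) (i : Fin (e + 1)) (j : ℕ) :
    IsLowerSet (layer t Q i j : Set (Fin e → ℕ)) := fun _ _ hr hmem => by
  simp only [mem_coe, mem_layer] at hmem ⊢
  exact hQ (liftAt_mono le_rfl hr) hmem

theorem layer_anti (hQ : IsLowerSet (Q : Set (Fin (e + 1) → ℕ))) (i : Fin (e + 1)) :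
    Antitone (layer t Q i) := fun _ _ hj _ hr => by
  simp only [mem_layer] at hr ⊢
  exact hQ (liftAt_mono hj le_rfl) hr

theorem biUnion_image_layer (hQt : ∀ k ∈ Q, ∃ i, k i < t) :
    univ.biUnion (fun s : Fin (e + 1) × Fin t => (layer t Q s.1 s.2).image (liftAt t s.1 s.2)) =
      Q := by
  ext k
  simp only [mem_biUnion, mem_univ, true_and, mem_image, mem_layer]
  refine ⟨fun ⟨_, _, hr, hk⟩ => hk ▸ hr, fun hk => ?_⟩
  obtain ⟨i, hi, hmin⟩ := WellFounded.has_min wellFounded_lt {i | k i < t} (hQt k hk)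
  obtain ⟨r, hr⟩ := exists_liftAt_eq (t := t) (i := i) fun i' hi' => not_lt.1 fun h => hmin i' h hi'
  exact ⟨(i, ⟨k i, hi⟩), r, by simpa [hr] using hk, hr⟩

theorem sum_card_layer (hQt : ∀ k ∈ Q, ∃ i, k i < t) :
    ∑ s : Fin (e + 1) × Fin t, (layer t Q s.1 s.2).card = Q.card := by
  conv_rhs => rw [← biUnion_image_layer hQt]
  rw [card_biUnion]
  · simp [card_image_of_injective _ (liftAt_injective _ _)]
  · rintro s - s' - hss'
    refine disjoint_left.2 fun k hk hk' => hss' ?_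
    simp only [mem_image] at hk hk'
    obtain ⟨r, -, rfl⟩ := hk
    obtain ⟨r', -, h⟩ := hk'
    obtain ⟨hi, hj⟩ := eq_of_liftAt_eq s'.2.2 s.2.2 h
    exact Prod.ext hi.symm (Fin.ext hj.symm)

variable (t) in
def decode {m : ℕ} (c : Fin m → Fin (e + 1)) (F : Fin m → Finset (Fin e → ℕ)) :
    Finset (Fin (e + 1) → ℕ) :=
  univ.biUnion fun l => (F l).image (liftAt t (c l) (rank c l))

theorem exists_decode_eq (hQ : IsLowerSet (Q : Set (Fin (e + 1) → ℕ)))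
    (hQt : ∀ k ∈ Q, ∃ i, k i < t) :
    ∃ (c : Fin ((e + 1) * t) → Fin (e + 1)) (F : Fin ((e + 1) * t) → Finset (Fin e → ℕ)),
      (∀ l, IsLowerSet (F l : Set (Fin e → ℕ))) ∧ Antitone (card ∘ F) ∧
        ∑ l, (F l).card = Q.card ∧ decode t c F = Q := by
  obtain ⟨π, hanti, hrow⟩ := exists_equiv_fin_antitone_comp (m := (e + 1) * t) (by simp)
    (fun s : Fin (e + 1) × Fin t => (layer t Q s.1 s.2).card)
    fun i _ _ hj => card_le_card (layer_anti hQ i (Fin.le_iff_val_le_val.1 hj))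
  refine ⟨Prod.fst ∘ π, fun l => layer t Q (π l).1 (π l).2, fun l => isLowerSet_layer hQ _ _, hanti,
    (π.sum_comp fun s => (layer t Q s.1 s.2).card).trans (sum_card_layer hQt), ?_⟩
  conv_rhs => rw [← biUnion_image_layer hQt]
  ext k
  simp only [decode, mem_biUnion, mem_univ, true_and, ← snd_eq_rank π hrow, comp_apply]
  exact π.exists_congr_left.trans (by simp)

end LowerCount

open LowerCount in
theorem lowerCount_succ_le_of_lt_pow {e t n : ℕ} (hn : n < (t + 1) ^ (e + 1)) :
    lowerCount (e + 1) n ≤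
      (e + 1) ^ ((e + 1) * t) *
        ∑ f : PaddedPartition ((e + 1) * t) n, ∏ l, lowerCount e (f.1 l) := by
  classical
  let Code := (Fin ((e + 1) * t) → Fin (e + 1)) ×
    Σ f : PaddedPartition ((e + 1) * t) n, ∀ l, LowerSets e (f.1 l)
  have hcode (Q : LowerSets (e + 1) n) : ∃ x : Code, decode t x.1 (fun l => (x.2.2 l).1) = Q.1 := by
    obtain ⟨hQ, hcard⟩ := Q.2
    obtain ⟨c, F, hF, hanti, hsum, hdec⟩ := exists_decode_eq (t := t) hQ
      fun k hk => exists_lt_of_card_lt_pow hQ (by simpa [hcard] using hn) hk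
    exact ⟨(c, ⟨⟨card ∘ F, hanti, hsum.trans hcard⟩, fun l => ⟨F l, hF l, rfl⟩⟩), hdec⟩
  choose encode hencode using hcode
  calc lowerCount (e + 1) n ≤ Nat.card Code :=
        Nat.card_le_card_of_injective encode fun Q Q' h =>
          Subtype.ext (by rw [← hencode Q, ← hencode Q', h])
    _ = _ := by
        simp [Code, Nat.card_eq_fintype_card, Fintype.card_sigma, Fintype.card_pi,
          lowerCount_eq_card]

theorem lt_add_one_floor_rpow_inv_pow (n : ℕ) {d : ℕ} (hd : d ≠ 0) :
    n < (⌊(n : ℝ) ^ ((1 : ℝ) / (d : ℝ))⌋₊ + 1) ^ d := by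
  rw [one_div]
  have := pow_lt_pow_left₀ (Nat.lt_floor_add_one ((n : ℝ) ^ (d : ℝ)⁻¹)) (by positivity) hd
  rw [Real.rpow_inv_natCast_pow (Nat.cast_nonneg n) hd] at this
  exact_mod_cast this

theorem stmt_13_general (d n : ℕ) (hd : 2 ≤ d) :
    lowerCount d n ≤
      d ^ (d * ⌊(n : ℝ) ^ ((1 : ℝ) / (d : ℝ))⌋₊) *
        ∑ p ∈ Finset.univ.filter
            (fun p : Nat.Partition n =>
              Multiset.card p.parts ≤ d * ⌊(n : ℝ) ^ ((1 : ℝ) / (d : ℝ))⌋₊),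
          (p.parts.map (fun i => lowerCount (d - 1) i)).prod := by
  obtain ⟨e, rfl⟩ : ∃ e, d = e + 1 := ⟨d - 1, by omega⟩
  rw [Nat.add_sub_cancel]
  calc lowerCount (e + 1) n ≤ _ :=
        lowerCount_succ_le_of_lt_pow (lt_add_one_floor_rpow_inv_pow n (Nat.succ_ne_zero e))
    _ ≤ _ := Nat.mul_le_mul_left _ (PaddedPartition.sum_prod_le (lowerCount_zero e))

theorem stmt_13 (d n : ℕ) (hd : 2 ≤ d) (hn : 1 ≤ n) :
    lowerCount d n ≤
      d ^ (d * ⌊(n : ℝ) ^ ((1 : ℝ) / (d : ℝ))⌋₊) *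
        ∑ p ∈ Finset.univ.filter
            (fun p : Nat.Partition n =>
              Multiset.card p.parts ≤ d * ⌊(n : ℝ) ^ ((1 : ℝ) / (d : ℝ))⌋₊),
          (p.parts.map (fun i => lowerCount (d - 1) i)).prod :=
  stmt_13_general d n hd
end

section
/- For every integer d ≥ 4, one has 1/((2.6·d)^{d/2−1}·(d−1)^{ln(d−1)}) + 1/(1.25·(2.6·d)^{d−2}) + d^{1/(d−1)} < (d+1)^{1/(d−1)}, where all powers are real powers. -/
/-!
Put `a = 1/(d-1)`. Writing `(d+1)^a = d^a · exp(a log(1 + 1/d))` and using `exp t ≥ 1 + t`,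
`log y ≥ 1 - 1/y` and `d^a ≥ 1` gives the gap `(d+1)^a - d^a ≥ a/(d+1) = 1/(d²-1)`.
The two remaining terms decay much faster: bounding the exponents `d/2 - 1`, `ln(d-1)` below
by `1` and `d - 2` by `2` shows that they are at most `2/3` and `1/3` of `1/(d²-1)`.
-/

open Real

namespace Real

lemma one_add_mul_one_sub_inv_le_rpow {y a : ℝ} (hy : 0 < y) (ha : 0 ≤ a) :
    1 + a * (1 - y⁻¹) ≤ y ^ a :=
  calc 1 + a * (1 - y⁻¹) ≤ a * log y + 1 := by
        nlinarith [one_sub_inv_le_log_of_pos hy]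
    _ ≤ exp (log y * a) := by rw [mul_comm]; exact add_one_le_exp _
    _ = y ^ a := (rpow_def_of_pos hy a).symm

lemma rpow_add_div_le_add_one_rpow {x a : ℝ} (hx : 1 ≤ x) (ha : 0 ≤ a) :
    x ^ a + a / (x + 1) ≤ (x + 1) ^ a := by
  have hx0 : 0 < x := by linarith
  have hratio : 1 + a / (x + 1) ≤ ((x + 1) / x) ^ a := by
    convert one_add_mul_one_sub_inv_le_rpow (y := (x + 1) / x) (by positivity) ha using 2
    field_simp
    ring
  have hsplit : (x + 1) ^ a = x ^ a * ((x + 1) / x) ^ a := by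
    rw [← mul_rpow hx0.le (by positivity), mul_div_cancel₀ _ hx0.ne']
  have hxa : 1 ≤ x ^ a := one_le_rpow hx ha
  rw [hsplit]
  nlinarith [div_nonneg ha (by linarith : (0 : ℝ) ≤ x + 1)]

end Real

lemma one_div_rpow_mul_rpow_log_le {x : ℝ} (hx : 4 ≤ x) :
    1 / ((2.6 * x) ^ (x / 2 - 1) * (x - 1) ^ log (x - 1)) ≤ 2 / 3 / ((x - 1) * (x + 1)) := by
  have hlog : 1 ≤ log (x - 1) := by
    rw [le_log_iff_exp_le (by linarith)]
    linarith [exp_one_lt_d9]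
  have hpow : 2.6 * x * (x - 1) ≤ (2.6 * x) ^ (x / 2 - 1) * (x - 1) ^ log (x - 1) :=
    mul_le_mul (self_le_rpow_of_one_le (by linarith) (by linarith))
      (self_le_rpow_of_one_le (by linarith) hlog) (by linarith) (by positivity)
  calc 1 / ((2.6 * x) ^ (x / 2 - 1) * (x - 1) ^ log (x - 1))
      ≤ 1 / (2.6 * x * (x - 1)) := one_div_le_one_div_of_le (by nlinarith) hpow
    _ ≤ 2 / 3 / ((x - 1) * (x + 1)) := by
      rw [div_le_div_iff₀ (by nlinarith) (by nlinarith)]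
      nlinarith

lemma one_div_mul_rpow_sub_two_lt {x : ℝ} (hx : 4 ≤ x) :
    1 / (1.25 * (2.6 * x) ^ (x - 2)) < 1 / 3 / ((x - 1) * (x + 1)) := by
  have hpow : (2.6 * x) ^ 2 ≤ (2.6 * x) ^ (x - 2) := by
    rw [← rpow_two]
    exact rpow_le_rpow_of_exponent_le (by linarith) (by linarith)
  calc 1 / (1.25 * (2.6 * x) ^ (x - 2))
      ≤ 1 / (1.25 * (2.6 * x) ^ 2) := one_div_le_one_div_of_le (by positivity) (by linarith)
    _ < 1 / 3 / ((x - 1) * (x + 1)) := by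
      rw [div_lt_div_iff₀ (by positivity) (by nlinarith)]
      nlinarith

theorem stmt_16 (d : ℕ) (hd : 4 ≤ d) :
    1 / ((2.6 * (d : ℝ)) ^ ((d : ℝ) / 2 - 1) * ((d : ℝ) - 1) ^ Real.log ((d : ℝ) - 1)) +
        1 / (1.25 * (2.6 * (d : ℝ)) ^ ((d : ℝ) - 2)) +
        (d : ℝ) ^ ((1 : ℝ) / ((d : ℝ) - 1)) <
      ((d : ℝ) + 1) ^ ((1 : ℝ) / ((d : ℝ) - 1)) := by
  have hx : (4 : ℝ) ≤ d := by exact_mod_cast hd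
  have hgap := rpow_add_div_le_add_one_rpow (x := (d : ℝ)) (a := 1 / ((d : ℝ) - 1))
    (by linarith) (by rw [one_div_nonneg]; linarith)
  rw [div_div] at hgap
  linarith [one_div_rpow_mul_rpow_log_le hx, one_div_mul_rpow_sub_two_lt hx,
    show (2 : ℝ) / 3 / ((d - 1) * (d + 1)) + 1 / 3 / ((d - 1) * (d + 1))
      = 1 / ((d - 1) * (d + 1)) by ring]
end

section
/- For every integer d ≥ 4, one has (ln(d+1))/(d−1) < (2·ln d)/d < (ln d)² − (ln(d−1))²; consequently (d+1)^{1/(d−1)} < d^{ln d}/(d−1)^{ln(d−1)}. -/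
/-!
The first inequality is elementary: `(d + 1)² < d³` gives
`d log (d + 1) < (3/2) d log d ≤ 2 (d - 1) log d` once `d ≥ 4`. For the second, the mean
value theorem applied to `log²` on `[d - 1, d]` yields `log² d - log² (d - 1) = 2 log c / c`
for some `c ∈ (d - 1, d)`, and `log t / t` is strictly decreasing beyond `e`. Exponentiating
the chain gives the inequality between powers.
-/

open Real Set

namespace Real

theorem log_div_self_strictAntiOn : StrictAntiOn (fun x : ℝ ↦ log x / x) (Ici (exp 1)) := by
  intro x hex y hey hxy
  have x_pos : 0 < x := (exp_pos 1).trans_le hex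
  have y_pos : 0 < y := (exp_pos 1).trans_le hey
  have hlogx : 1 ≤ log x := by rwa [le_log_iff_exp_le x_pos]
  have hyx : 0 ≤ y / x - 1 := by rw [sub_nonneg, le_div_iff₀ x_pos, one_mul]; exact hxy.le
  have hyx_ne : y / x ≠ 1 := by rw [Ne, div_eq_one_iff_eq x_pos.ne']; exact hxy.ne'
  show log y / y < log x / x
  rw [div_lt_iff₀ y_pos, ← sub_lt_sub_iff_right (log x)]
  calc
    log y - log x = log (y / x) := by rw [log_div y_pos.ne' x_pos.ne']
    _ < y / x - 1 := log_lt_sub_one_of_pos (div_pos y_pos x_pos) hyx_ne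
    _ ≤ log x * (y / x - 1) := le_mul_of_one_le_left hyx hlogx
    _ = log x / x * y - log x := by field_simp

theorem hasDerivAt_log_sq {x : ℝ} (hx : x ≠ 0) :
    HasDerivAt (fun t ↦ log t ^ 2) (2 * log x / x) x := by
  refine ((hasDerivAt_log hx).pow 2).congr_deriv ?_
  push_cast
  ring

theorem sub_mul_two_mul_log_div_lt_log_sq_sub_log_sq {a b : ℝ} (ha : exp 1 ≤ a) (hab : a < b) :
    (b - a) * (2 * log b / b) < log b ^ 2 - log a ^ 2 := by
  have ha_pos : 0 < a := (exp_pos 1).trans_le ha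
  have hpos {t : ℝ} (ht : t ∈ Icc a b) : t ≠ 0 := (ha_pos.trans_le ht.1).ne'
  obtain ⟨c, hc, hslope⟩ := exists_hasDerivAt_eq_slope (fun t ↦ log t ^ 2)
    (fun t ↦ 2 * log t / t) hab
    ((continuousOn_log.mono fun t ht ↦ hpos ht).pow 2)
    (fun t ht ↦ hasDerivAt_log_sq (hpos (Ioo_subset_Icc_self ht)))
  have hdecr : 2 * log b / b < 2 * log c / c := by
    simp only [mul_div_assoc]
    exact mul_lt_mul_of_pos_left
      (log_div_self_strictAntiOn (ha.trans hc.1.le) (ha.trans hab.le) hc.2) two_pos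
  rw [eq_div_iff (sub_ne_zero.mpr hab.ne')] at hslope
  rw [← hslope, mul_comm _ (b - a)]
  exact mul_lt_mul_of_pos_left hdecr (sub_pos.mpr hab)

theorem log_add_one_div_sub_one_lt_two_mul_log_div {x : ℝ} (hx : 4 ≤ x) :
    log (x + 1) / (x - 1) < 2 * log x / x := by
  have hx_pos : 0 < x := by linarith
  have hlog_pos : 0 < log x := log_pos (by linarith)
  have hsq_lt_cube : 2 * log (x + 1) < 3 * log x := by
    have h := log_lt_log (by positivity) (show (x + 1) ^ 2 < x ^ 3 by nlinarith)
    rwa [log_pow, log_pow, Nat.cast_ofNat, Nat.cast_ofNat] at h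
  rw [div_lt_div_iff₀ (by linarith) hx_pos]
  nlinarith [mul_nonneg hlog_pos.le (show 0 ≤ x - 4 by linarith)]

end Real

theorem stmt_17 (d : ℕ) (hd : 4 ≤ d) :
    Real.log ((d : ℝ) + 1) / ((d : ℝ) - 1) < 2 * Real.log d / (d : ℝ) ∧
      2 * Real.log d / (d : ℝ) < (Real.log d) ^ 2 - (Real.log ((d : ℝ) - 1)) ^ 2 ∧
      ((d : ℝ) + 1) ^ ((1 : ℝ) / ((d : ℝ) - 1)) <
        (d : ℝ) ^ Real.log d / ((d : ℝ) - 1) ^ Real.log ((d : ℝ) - 1) := by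
  have hx : (4 : ℝ) ≤ d := by exact_mod_cast hd
  have hfirst := log_add_one_div_sub_one_lt_two_mul_log_div hx
  have hsecond : 2 * log d / d < log d ^ 2 - log (d - 1) ^ 2 := by
    have h := sub_mul_two_mul_log_div_lt_log_sq_sub_log_sq
      (show exp 1 ≤ (d : ℝ) - 1 by linarith [exp_one_lt_d9]) (sub_one_lt (d : ℝ))
    rwa [sub_sub_cancel, one_mul] at h
  refine ⟨hfirst, hsecond, ?_⟩
  rw [rpow_def_of_pos (by linarith), rpow_def_of_pos (by linarith),
    rpow_def_of_pos (by linarith), ← exp_sub, exp_lt_exp, mul_one_div]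
  simpa only [sq] using hfirst.trans hsecond
end

section
/- For every integer d ≥ 8, one has (d/(d!)^{1/d})·ln 2 > (d/(d−1))·((d−1)·ζ(d))^{1/d}, where ζ is the Riemann zeta function and the powers are real powers. -/
open Real Finset

noncomputable def Szeta (d : ℕ) : ℝ := ∑' k : ℕ, 1 / ((k : ℝ) + 1) ^ d

lemma Szeta_summable {d : ℕ} (hd : 2 ≤ d) :
    Summable (fun k : ℕ => 1 / ((k : ℝ) + 1) ^ d) := by
  have h : Summable (fun n : ℕ => 1 / (n : ℝ) ^ d) :=
    Real.summable_one_div_nat_pow.mpr (by omega)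
  have h2 := (summable_nat_add_iff 1).mpr h
  refine h2.congr fun n => ?_
  push_cast
  ring_nf

lemma one_le_Szeta {d : ℕ} (hd : 2 ≤ d) : 1 ≤ Szeta d := by
  have h := Szeta_summable hd
  have := Summable.le_tsum h 0 (fun j _ => by positivity)
  simpa [Szeta] using this

lemma Szeta_anti {d : ℕ} (hd : 2 ≤ d) : Szeta (d + 1) ≤ Szeta d := by
  rw [Szeta, Szeta]
  refine Summable.tsum_le_tsum (fun k => ?_) (Szeta_summable (by omega)) (Szeta_summable hd)
  have h1 : (1 : ℝ) ≤ (k : ℝ) + 1 := by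
    have : (0:ℝ) ≤ (k:ℝ) := Nat.cast_nonneg k
    linarith
  apply one_div_le_one_div_of_le (by positivity)
  exact pow_le_pow_right₀ h1 (Nat.le_succ d)

lemma Szeta_eight_le : Szeta 8 ≤ 65 / 64 := by
  have hsum := Szeta_summable (d := 8) (by norm_num)
  have h0 : Szeta 8 = 1 + ∑' k : ℕ, 1 / (((k : ℝ) + 1) + 1) ^ 8 := by
    rw [Szeta, Summable.tsum_eq_zero_add hsum]
    push_cast
    norm_num
  rw [h0]
  have htail : (∑' k : ℕ, 1 / (((k : ℝ) + 1) + 1) ^ 8) ≤ 1 / 64 := by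
    apply Real.tsum_le_of_sum_range_le (fun n => by positivity)
    intro n
    have hle : ∀ i ∈ range n, 1 / (((i : ℝ) + 1) + 1) ^ 8 ≤
        (1/64) * (1 / ((i : ℝ) + 1)) - (1/64) * (1 / ((i : ℝ) + 2)) := by
      intro i _
      have hx : (0 : ℝ) ≤ (i : ℝ) := Nat.cast_nonneg i
      have h1 : (1/64 : ℝ) * (1 / ((i : ℝ) + 1)) - (1/64) * (1 / ((i : ℝ) + 2)) =
          1 / (64 * (((i : ℝ) + 1) * ((i : ℝ) + 2))) := by
        field_simp
        ring
      rw [h1]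
      rw [div_le_div_iff₀ (by positivity) (by positivity)]
      have h2 : (64 : ℝ) ≤ ((i : ℝ) + 2) ^ 6 := by
        calc (64 : ℝ) = 2 ^ 6 := by norm_num
        _ ≤ ((i : ℝ) + 2) ^ 6 := by gcongr; linarith
      have h3 : ((i : ℝ) + 1 + 1) ^ 8 = ((i:ℝ)+2)^2 * ((i:ℝ)+2)^6 := by ring
      nlinarith [mul_le_mul_of_nonneg_left h2 (sq_nonneg ((i:ℝ)+2)), sq_nonneg ((i:ℝ)+2)]
    calc ∑ i ∈ range n, 1 / (((i : ℝ) + 1) + 1) ^ 8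
        ≤ ∑ i ∈ range n, ((1/64) * (1 / ((i : ℝ) + 1)) - (1/64) * (1 / ((i : ℝ) + 2))) :=
          Finset.sum_le_sum hle
      _ = (1/64) * (1 / ((0 : ℕ) + 1 : ℝ)) - (1/64) * (1 / ((n : ℝ) + 1)) := by
          have := Finset.sum_range_sub' (f := fun i : ℕ => (1/64 : ℝ) * (1 / ((i : ℝ) + 1))) n
          rw [← this]
          apply Finset.sum_congr rfl
          intro i _
          push_cast
          ring_nf
      _ ≤ 1 / 64 := by
          have : (0 : ℝ) < (n : ℝ) + 1 := by positivity
          have : (0 : ℝ) ≤ (1/64) * (1 / ((n : ℝ) + 1)) := by positivity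
          norm_num
          linarith
  linarith

lemma exp_one_le_ratio {d : ℕ} (hd : 8 ≤ d) :
    Real.exp 1 ≤ ((d : ℝ) / ((d : ℝ) - 1)) ^ d := by
  have hD : (8 : ℝ) ≤ (d : ℝ) := by exact_mod_cast hd
  have hD1 : (0 : ℝ) < (d : ℝ) - 1 := by linarith
  have hDpos : (0 : ℝ) < (d : ℝ) := by linarith
  have h1 : (1 : ℝ) - 1 / (d : ℝ) ≤ Real.exp (-(1 / (d : ℝ))) := by
    have := Real.add_one_le_exp (-(1 / (d : ℝ)))
    linarith
  have h2 : Real.exp (1 / (d : ℝ)) ≤ (d : ℝ) / ((d : ℝ) - 1) := by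
    rw [Real.exp_neg] at h1
    have hexp : (0 : ℝ) < Real.exp (1 / (d : ℝ)) := Real.exp_pos _
    rw [le_div_iff₀ hD1]
    have h3 : ((1 : ℝ) - 1 / (d : ℝ)) * Real.exp (1 / (d : ℝ)) ≤ 1 := by
      calc ((1 : ℝ) - 1 / (d : ℝ)) * Real.exp (1 / (d : ℝ))
          ≤ (Real.exp (1 / (d : ℝ)))⁻¹ * Real.exp (1 / (d : ℝ)) := by
            apply mul_le_mul_of_nonneg_right h1 hexp.le
        _ = 1 := inv_mul_cancel₀ hexp.ne'
    have h4 : ((d : ℝ) - 1) = ((1 : ℝ) - 1 / (d : ℝ)) * (d : ℝ) := by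
      field_simp
    rw [h4]
    calc Real.exp (1 / (d : ℝ)) * (((1 : ℝ) - 1 / (d : ℝ)) * (d : ℝ))
        = (((1 : ℝ) - 1 / (d : ℝ)) * Real.exp (1 / (d : ℝ))) * (d : ℝ) := by ring
      _ ≤ 1 * (d : ℝ) := by apply mul_le_mul_of_nonneg_right h3 hDpos.le
      _ = (d : ℝ) := one_mul _
  calc Real.exp 1 = Real.exp ((d : ℝ) * (1 / (d : ℝ))) := by
        rw [mul_one_div, div_self hDpos.ne']
    _ = Real.exp (1 / (d : ℝ)) ^ d := by
        rw [← Real.exp_nat_mul]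
    _ ≤ ((d : ℝ) / ((d : ℝ) - 1)) ^ d := by
        apply pow_le_pow_left₀ (Real.exp_pos _).le h2

lemma key (d : ℕ) (hd : 8 ≤ d) :
    ((d : ℝ) - 1) * Szeta d * (Nat.factorial d : ℝ) <
      (((d : ℝ) - 1) * Real.log 2) ^ d := by
  induction d, hd using Nat.le_induction with
  | base =>
    have hS := Szeta_eight_le
    have hS1 : (1 : ℝ) ≤ Szeta 8 := one_le_Szeta (by norm_num)
    have hlog := Real.log_two_gt_d9
    have h1 : ((8 : ℕ) : ℝ) - 1 = 7 := by norm_num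
    have h2 : (Nat.factorial 8 : ℝ) = 40320 := by norm_num [Nat.factorial]
    rw [h1, h2]
    calc (7 : ℝ) * Szeta 8 * 40320 ≤ 7 * (65 / 64) * 40320 := by nlinarith
      _ < (7 * 0.6931471803) ^ 8 := by norm_num
      _ ≤ (7 * Real.log 2) ^ 8 := by
          apply pow_le_pow_left₀ (by norm_num) (by nlinarith)
  | succ d hd IH =>
    have hD : (8 : ℝ) ≤ (d : ℝ) := by exact_mod_cast hd
    have hD1 : (0 : ℝ) < (d : ℝ) - 1 := by linarith
    have hDpos : (0 : ℝ) < (d : ℝ) := by linarith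
    have hlog := Real.log_two_gt_d9
    have hlogpos : (0 : ℝ) < Real.log 2 := by linarith
    have hexp := Real.exp_one_gt_d9
    have hS1 : (1 : ℝ) ≤ Szeta d := one_le_Szeta (by omega)
    have hS1' : (1 : ℝ) ≤ Szeta (d + 1) := one_le_Szeta (by omega)
    have hSanti : Szeta (d + 1) ≤ Szeta d := Szeta_anti (by omega)
    have hF : (0 : ℝ) < (Nat.factorial d : ℝ) := by
      exact_mod_cast Nat.factorial_pos d
    have hA : (0 : ℝ) < (((d : ℝ) - 1) * Real.log 2) ^ d := by positivity
    -- casts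
    have hcast1 : ((d + 1 : ℕ) : ℝ) - 1 = (d : ℝ) := by push_cast; ring
    have hcast2 : (Nat.factorial (d + 1) : ℝ) = ((d : ℝ) + 1) * (Nat.factorial d : ℝ) := by
      rw [Nat.factorial_succ]; push_cast; ring
    rw [hcast1, hcast2]
    -- exp bound gives ((d-1) log2)^d * e ≤ (d log2)^d
    have hratio := exp_one_le_ratio hd
    have hpow : Real.exp 1 * (((d : ℝ) - 1) * Real.log 2) ^ d ≤ ((d : ℝ) * Real.log 2) ^ d := by
      have h5 : ((d : ℝ) * Real.log 2) ^ d =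
          ((d : ℝ) / ((d : ℝ) - 1)) ^ d * (((d : ℝ) - 1) * Real.log 2) ^ d := by
        rw [← mul_pow]
        congr 1
        field_simp
      rw [h5]
      apply mul_le_mul_of_nonneg_right hratio hA.le
    -- step 1: LHS ≤ (d+1) * d / (d-1) * (old LHS)
    have step1 : (d : ℝ) * Szeta (d + 1) * (((d : ℝ) + 1) * (Nat.factorial d : ℝ)) * ((d : ℝ) - 1)
        ≤ ((d : ℝ) + 1) * (d : ℝ) * (((d : ℝ) - 1) * Szeta d * (Nat.factorial d : ℝ)) := by
      have := mul_le_mul_of_nonneg_right hSanti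
        (by positivity : (0 : ℝ) ≤ (d : ℝ) * (((d : ℝ) + 1) * (Nat.factorial d : ℝ)) * ((d : ℝ) - 1))
      nlinarith [hSanti, hF, hD1, hDpos]
    have step2 : ((d : ℝ) + 1) * (d : ℝ) * (((d : ℝ) - 1) * Szeta d * (Nat.factorial d : ℝ))
        < ((d : ℝ) + 1) * (d : ℝ) * (((d : ℝ) - 1) * Real.log 2) ^ d := by
      apply mul_lt_mul_of_pos_left IH (by positivity)
    have step3 : ((d : ℝ) + 1) * (d : ℝ) * (((d : ℝ) - 1) * Real.log 2) ^ d
        ≤ ((d : ℝ) * Real.log 2) ^ (d + 1) * ((d : ℝ) - 1) := by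
      have h6 : ((d : ℝ) + 1) ≤ ((d : ℝ) - 1) * (Real.log 2 * Real.exp 1) := by
        have hprod : (0.6931471803 : ℝ) * 2.7182818283 < Real.log 2 * Real.exp 1 :=
          mul_lt_mul'' hlog hexp (by norm_num) (by norm_num)
        nlinarith [mul_le_mul_of_nonneg_left hprod.le hD1.le]
      calc ((d : ℝ) + 1) * (d : ℝ) * (((d : ℝ) - 1) * Real.log 2) ^ d
          ≤ (((d : ℝ) - 1) * (Real.log 2 * Real.exp 1)) * (d : ℝ) *
              (((d : ℝ) - 1) * Real.log 2) ^ d := by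
            apply mul_le_mul_of_nonneg_right (mul_le_mul_of_nonneg_right h6 hDpos.le) hA.le
        _ = ((d : ℝ) - 1) * Real.log 2 * (d : ℝ) *
              (Real.exp 1 * (((d : ℝ) - 1) * Real.log 2) ^ d) := by ring
        _ ≤ ((d : ℝ) - 1) * Real.log 2 * (d : ℝ) * ((d : ℝ) * Real.log 2) ^ d := by
            apply mul_le_mul_of_nonneg_left hpow (by positivity)
        _ = ((d : ℝ) * Real.log 2) ^ (d + 1) * ((d : ℝ) - 1) := by
            rw [pow_succ]; ring
    have final : (d : ℝ) * Szeta (d + 1) * (((d : ℝ) + 1) * (Nat.factorial d : ℝ)) * ((d : ℝ) - 1)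
        < ((d : ℝ) * Real.log 2) ^ (d + 1) * ((d : ℝ) - 1) := by
      calc _ ≤ _ := step1
        _ < _ := step2
        _ ≤ _ := step3
    exact lt_of_mul_lt_mul_right final hD1.le

theorem stmt_19 (d : ℕ) (hd : 8 ≤ d) :
    ((d : ℝ) / ((d : ℝ) - 1)) *
        (((d : ℝ) - 1) * (∑' k : ℕ, 1 / ((k : ℝ) + 1) ^ d)) ^ ((1 : ℝ) / (d : ℝ)) <
      ((d : ℝ) / (Nat.factorial d : ℝ) ^ ((1 : ℝ) / (d : ℝ))) * Real.log 2 := by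
  have hD : (8:ℝ) ≤ d := by exact_mod_cast hd
  have hD1 : (0:ℝ) < (d:ℝ) - 1 := by linarith
  have hDpos : (0:ℝ) < (d:ℝ) := by linarith
  have hS1 : (1:ℝ) ≤ Szeta d := one_le_Szeta (by omega)
  have hF : (0:ℝ) < (Nat.factorial d : ℝ) := by exact_mod_cast Nat.factorial_pos d
  have hlogpos : (0:ℝ) < Real.log 2 := Real.log_pos (by norm_num)
  have hK := key d hd
  have hSdef : (∑' k : ℕ, 1 / ((k : ℝ) + 1) ^ d) = Szeta d := rfl
  rw [hSdef]
  set p : ℝ := (1:ℝ)/(d:ℝ) with hpdef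
  have hp : (0:ℝ) < p := by rw [hpdef]; positivity
  have hmul : (((d:ℝ)-1) * Szeta d * (Nat.factorial d : ℝ)) ^ p
      = (((d:ℝ)-1) * Szeta d) ^ p * (Nat.factorial d : ℝ) ^ p :=
    Real.mul_rpow (by positivity) hF.le
  have hrhs : ((((d:ℝ)-1) * Real.log 2) ^ d) ^ p = ((d:ℝ)-1) * Real.log 2 := by
    rw [← Real.rpow_natCast (((d:ℝ)-1) * Real.log 2) d, ← Real.rpow_mul (by positivity)]
    rw [hpdef, mul_one_div, div_self hDpos.ne', Real.rpow_one]
  have h2 : (((d:ℝ)-1) * Szeta d) ^ p * (Nat.factorial d : ℝ) ^ p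
      < ((d:ℝ)-1) * Real.log 2 := by
    rw [← hmul, ← hrhs]
    exact Real.rpow_lt_rpow (by positivity) hK hp
  have hFp : (0:ℝ) < (Nat.factorial d : ℝ) ^ p := Real.rpow_pos_of_pos hF p
  have hX : (0:ℝ) ≤ (((d:ℝ)-1) * Szeta d) ^ p := Real.rpow_nonneg (by positivity) p
  rw [div_mul_eq_mul_div, div_mul_eq_mul_div, div_lt_div_iff₀ hD1 hFp]
  nlinarith [mul_lt_mul_of_pos_left h2 hDpos]
end
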